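/- arXiv:2307.05569 — 6 statements merged into one kernel-verified Lean document; each statement's English description precedes it below -/
import Mathlib

section
/- (Redei's theorem) Let D=(V,A) be a tournament. Then the number of Hamiltonian paths of D is odd, where by convention the empty list counts as a Hamiltonian path of the empty tournament with 0 vertices. Equivalently: the number of V-listings (w_1,…,w_n) such that (w_i,w_{i+1}) ∈ A for every i ∈ {1,…,n−1} is odd. -/
open scoped Classical

noncomputable section

/-- The power sum `p_k = x_1^k + x_2^k + ⋯` as a formal power series over `R`
in countably many variables indexed by the positive integers. -/
def pSumR (R : Type) [CommRing R] (k : ℕ) : MvPowerSeries ℕ+ R :=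
  fun d => if ∃ i : ℕ+, d = Finsupp.single i k then 1 else 0

/-- The power sum `p_k` over `ℤ`. -/
def pSum (k : ℕ) : MvPowerSeries ℕ+ ℤ := pSumR ℤ k

/-- The fundamental quasisymmetric function `L_{I,n}` (with positions 0-indexed):
its coefficient at a monomial `d` is the number of weakly increasing `n`-tuples
`(i_0, …, i_{n-1})` of positive integers, strictly increasing at the positions in `I`,
whose associated monomial `x_{i_0} ⋯ x_{i_{n-1}}` is `d`. -/
def Lfun (n : ℕ) (I : Set ℕ) : MvPowerSeries ℕ+ ℤ :=
  fun d =>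
    ((Set.ncard {i : Fin n → ℕ+ |
        Monotone i ∧
        (∀ (p : ℕ) (h : p + 1 < n), p ∈ I → i ⟨p, Nat.lt_of_succ_lt h⟩ < i ⟨p + 1, h⟩) ∧
        (∑ k : Fin n, Finsupp.single (i k) 1) = d}) : ℤ)

/-- The descent set `Des(w, D)` (0-indexed) of the `V`-listing `w = (e 0, e 1, …, e (n-1))`
with respect to the digraph with arc set `A`. -/
def descents {V : Type} (A : Set (V × V)) {n : ℕ} (e : Fin n ≃ V) : Set ℕ :=
  {p | ∃ h : p + 1 < n, (e ⟨p, Nat.lt_of_succ_lt h⟩, e ⟨p + 1, h⟩) ∈ A}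

/-- The Redei–Berge symmetric function `U_D` of the digraph `D = (V, A)`. -/
def redeiBerge (V : Type) [Fintype V] [DecidableEq V] (A : Set (V × V)) :
    MvPowerSeries ℕ+ ℤ :=
  ∑ e : Fin (Fintype.card V) ≃ V, Lfun (Fintype.card V) (descents A e)

/-- The cycles of a permutation `σ`, each represented by its set of entries
(i.e. by the corresponding orbit of `σ`). -/
def cyclesOf {V : Type} [Fintype V] [DecidableEq V] (σ : Equiv.Perm V) :
    Finset (Finset V) :=
  Finset.univ.image fun v => Finset.univ.filter fun u => σ.SameCycle v u

/-- `p_{type σ}`: the product of `p_{ℓ(γ)}` over all cycles `γ` of `σ`. -/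
def pType {V : Type} [Fintype V] [DecidableEq V] (σ : Equiv.Perm V) :
    MvPowerSeries ℕ+ ℤ :=
  ∏ O ∈ cyclesOf σ, pSum O.card

/-- `φ(σ) = ∑ (ℓ(γ) - 1)`, summed over all cycles `γ` of `σ` that are `D`-cycles.
A cycle of `σ` with orbit `O` is a `D`-cycle iff all its cyclic arcs `(u, σ u)`
(for `u ∈ O`) lie in `A`. -/
def phi {V : Type} [Fintype V] [DecidableEq V] (A : Set (V × V)) (σ : Equiv.Perm V) : ℕ :=
  ∑ O ∈ (cyclesOf σ).filter (fun O => ∀ u ∈ O, (u, σ u) ∈ A), (O.card - 1)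

/-- `σ ∈ S_V(D, D̄)`: each cycle of `σ` is a `D`-cycle or a `D̄`-cycle. -/
def memSVDDbar {V : Type} [Fintype V] [DecidableEq V] (A : Set (V × V))
    (σ : Equiv.Perm V) : Prop :=
  ∀ O ∈ cyclesOf σ, (∀ u ∈ O, (u, σ u) ∈ A) ∨ (∀ u ∈ O, (u, σ u) ∉ A)

/-- `σ ∈ S_V(D)`: each nontrivial cycle of `σ` is a `D`-cycle. -/
def memSVD {V : Type} [Fintype V] [DecidableEq V] (A : Set (V × V))
    (σ : Equiv.Perm V) : Prop :=
  ∀ O ∈ cyclesOf σ, 1 < O.card → ∀ u ∈ O, (u, σ u) ∈ A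

/-- `ψ(σ)`: the number of nontrivial cycles of `σ`. -/
def psi {V : Type} [Fintype V] [DecidableEq V] (σ : Equiv.Perm V) : ℕ :=
  ((cyclesOf σ).filter fun O => 1 < O.card).card

/-- The digraph `(V, A)` is a tournament: no loops, and for any two distinct vertices
`u, v`, exactly one of `(u,v)` and `(v,u)` is an arc. -/
def IsTournament {V : Type} (A : Set (V × V)) : Prop :=
  (∀ u : V, (u, u) ∉ A) ∧ ∀ u v : V, u ≠ v → Xor' ((u, v) ∈ A) ((v, u) ∈ A)

/-- The number of Hamiltonian paths of the digraph `(W, B)` (the empty list counts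
as a Hamiltonian path when `W` is empty). -/
def hampCount (W : Type) [Fintype W] (B : Set (W × W)) : ℕ :=
  Set.ncard {w : List W | w.Nodup ∧ (∀ x : W, x ∈ w) ∧ w.Chain' fun a b => (a, b) ∈ B}

/-- `A_σ = {(v, σ v) : v ∈ V}`. -/
def ApermSet {V : Type} (σ : Equiv.Perm V) : Set (V × V) :=
  Set.range fun v => (v, σ v)

/-- The arc set of a tuple (encoded as a list): the set of its consecutive pairs. -/
def arcsList {V : Type} (p : List V) : Set (V × V) := {a | a ∈ p.zip p.tail}

/-- `C` is a path cover of `V`: a set of paths of `V` (nonempty tuples of distinct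
elements) such that each element of `V` belongs to exactly one of these paths. -/
def IsPathCover (V : Type) (C : Set (List V)) : Prop :=
  (∀ p ∈ C, p ≠ [] ∧ p.Nodup) ∧ ∀ v : V, ∃! p, p ∈ C ∧ v ∈ p

/-- The arc set of a path cover. -/
def arcsCover {V : Type} (C : Set (List V)) : Set (V × V) :=
  ⋃ p ∈ C, arcsList p

/-- A subset `F ⊆ V × V` is linear if it is the arc set of some path cover of `V`. -/
def IsLinear (V : Type) (F : Set (V × V)) : Prop :=
  ∃ C : Set (List V), IsPathCover V C ∧ F = arcsCover C

/-! Deletion–contraction: the Hamiltonian paths of `B ∪ {xy}` that are not Hamiltonian paths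
of `B` are exactly those passing through the arc `xy`, and they correspond to the Hamiltonian
paths of the digraph obtained by contracting `xy`. Contraction commutes with taking the
complement, so induction on the vertices and the arcs gives Berge's theorem: a digraph `D` and
its complement `D̄` have the same number of Hamiltonian paths modulo 2.

Write `ham D` for the number of Hamiltonian paths of `D`. For a tournament `T` with an arc
`uv`, put `D = T ∖ {uv}` and let `T'` be `T` with `uv` reversed. The complement of `D` is the
reverse of `D ∪ {uv, vu}`, and `ham (D ∪ {uv, vu}) = ham T + ham T' - ham D`; so Berge's
theorem gives `ham T ≡ ham T' (mod 2)`. Any two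
tournaments on `V` are connected by such reversals, and the transitive tournament of a linear
order has exactly one Hamiltonian path, the sorted listing. -/

open scoped Nat

theorem List.Nodup.isChain_congr {α : Type*} {R S : α → α → Prop} {l : List α}
    (hl : l.Nodup) (h : ∀ a b, a ≠ b → (R a b ↔ S a b)) : l.IsChain R ↔ l.IsChain S := by
  simp only [List.isChain_iff_forall_rel_of_append_cons_cons]
  refine forall₄_congr fun a b l₁ l₂ => imp_congr_right fun hl' => h a b ?_
  subst hl'
  simp_all [List.nodup_append]

section HamiltonianPaths

variable {V : Type}

def hamPaths (B : Set (V × V)) : Set (List V) :=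
  {w | w.Nodup ∧ (∀ x, x ∈ w) ∧ w.IsChain fun a b => (a, b) ∈ B}

def arcCompl (B : Set (V × V)) : Set (V × V) :=
  {p | p.1 ≠ p.2 ∧ p ∉ B}

def inducedArcs (p : V → Prop) (B : Set (V × V)) : Set (Subtype p × Subtype p) :=
  Prod.map Subtype.val Subtype.val ⁻¹' B

theorem hampCount_eq_ncard_hamPaths [Fintype V] (B : Set (V × V)) :
    hampCount V B = (hamPaths B).ncard :=
  rfl

theorem hamPaths_finite [Fintype V] (B : Set (V × V)) : (hamPaths B).Finite :=
  (List.finite_length_le V (Fintype.card V)).subset fun _ hw => hw.1.length_le_card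

theorem hamPaths_mono {A B : Set (V × V)} (h : A ⊆ B) : hamPaths A ⊆ hamPaths B :=
  fun _ ⟨hnd, hall, hc⟩ => ⟨hnd, hall, hc.imp fun _ _ hab => h hab⟩

theorem hamPaths_congr {A B : Set (V × V)}
    (h : ∀ a b, a ≠ b → ((a, b) ∈ A ↔ (a, b) ∈ B)) :
    hamPaths A = hamPaths B := by
  ext w
  exact and_congr_right fun hnd => and_congr_right fun _ => hnd.isChain_congr h

theorem ncard_hamPaths_swap (B : Set (V × V)) :
    (hamPaths (Prod.swap ⁻¹' B)).ncard = (hamPaths B).ncard := by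
  have : hamPaths (Prod.swap ⁻¹' B) = List.reverse ⁻¹' hamPaths B := by
    ext w
    simp [hamPaths, List.isChain_reverse]
  rw [this, Set.ncard_preimage_of_injective_subset_range List.reverse_injective
    (by simp [List.reverse_surjective.range_eq])]

theorem ncard_hamPaths_inducedArcs (p : V → Prop) (C : Set (V × V)) :
    (hamPaths (inducedArcs p C)).ncard =
      {w : List V | w.Nodup ∧ (∀ z, z ∈ w ↔ p z) ∧
        w.IsChain fun a b => (a, b) ∈ C}.ncard := by
  rw [← Set.ncard_image_of_injective _ (List.map_injective_iff.2 Subtype.val_injective)]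
  congr 1
  ext w
  constructor
  · rintro ⟨w, ⟨hnd, hall, hc⟩, rfl⟩
    refine ⟨hnd.map Subtype.val_injective, fun z => ⟨?_, fun hz => ?_⟩,
      (List.isChain_map _).2 hc⟩
    · simp only [List.mem_map]
      rintro ⟨a, -, rfl⟩
      exact a.2
    · exact List.mem_map_of_mem (f := Subtype.val) (hall ⟨z, hz⟩)
  · rintro ⟨hnd, hall, hc⟩
    lift w to List (Subtype p) using fun z hz => (hall z).1 hz
    exact ⟨w, ⟨hnd.of_map _, fun z => (List.mem_map_of_injective Subtype.val_injective).1
      ((hall z).2 z.2), (List.isChain_map _).1 hc⟩, rfl⟩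

-- Contraction of the arc `xy`: the merged vertex is called `y` and has the in-arcs of `x` and
-- the out-arcs of `y`; it is only used on the vertices other than `x`.
def contractArc (B : Set (V × V)) (x y : V) : Set (V × V) :=
  {p | if p.2 = y then (p.1, x) ∈ B else p ∈ B}

def insertBefore (x y : V) (w : List V) : List V :=
  w.takeWhile (· ≠ y) ++ x :: w.dropWhile (· ≠ y)

theorem insertBefore_append_cons {x y : V} {P : List V} (hP : y ∉ P) (Q : List V) :
    insertBefore x y (P ++ y :: Q) = P ++ x :: y :: Q := by
  have hPy : ∀ a ∈ P, decide (a ≠ y) = true := fun a ha =>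
    decide_eq_true (ne_of_mem_of_not_mem ha hP)
  rw [insertBefore, List.takeWhile_append_of_pos hPy, List.dropWhile_append_of_pos hPy]
  simp

theorem erase_insertBefore {x y : V} {w : List V} (hx : x ∉ w) :
    (insertBefore x y w).erase x = w := by
  rw [insertBefore, List.erase_append_right _ fun h => hx (List.takeWhile_subset _ h),
    List.erase_cons_head, List.takeWhile_append_dropWhile]

theorem exists_eq_append_of_isChain_insert {B : Set (V × V)} {x y : V} {w : List V}
    (h : w.IsChain fun a b => (a, b) ∈ insert (x, y) B)
    (h' : ¬ w.IsChain fun a b => (a, b) ∈ B) :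
    ∃ P Q, w = P ++ x :: y :: Q := by
  rw [List.isChain_iff_forall_rel_of_append_cons_cons] at h h'
  simp only [not_forall] at h'
  obtain ⟨a, b, P, Q, rfl, hab⟩ := h'
  obtain ⟨rfl, rfl⟩ : a = x ∧ b = y := by simpa [hab] using h rfl
  exact ⟨P, Q, rfl⟩

theorem isChain_insert_iff_contractArc {B : Set (V × V)} {x y : V} (hxy : x ≠ y) {P Q : List V}
    (hP : y ∉ P) (hQ : y ∉ Q) :
    (P ++ x :: y :: Q).IsChain (fun a b => (a, b) ∈ insert (x, y) B) ↔
      (P ++ y :: Q).IsChain (fun a b => (a, b) ∈ contractArc B x y) := by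
  have hne : ∀ a b, b ≠ y → ((a, b) ∈ insert (x, y) B ↔ (a, b) ∈ contractArc B x y) :=
    fun a b hb => by simp [contractArc, hb]
  rw [List.isChain_append, List.isChain_append, List.isChain_cons_cons, List.isChain_cons,
    List.isChain_cons,
    List.IsChain.iff_of_mem_imp fun a b _ hb => hne a b (ne_of_mem_of_not_mem hb hP),
    List.IsChain.iff_of_mem_imp fun a b _ hb => hne a b (ne_of_mem_of_not_mem hb hQ)]
  have hQy : ∀ q, Q.head? = some q → q ≠ y := fun q hq =>
    ne_of_mem_of_not_mem (List.mem_of_mem_head? hq) hQ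
  simp +contextual [contractArc, hxy, hxy.symm, hQy]

theorem ncard_hamPaths_insert [Fintype V] {B : Set (V × V)} {x y : V} (hxy : x ≠ y)
    (hB : (x, y) ∉ B) :
    (hamPaths (insert (x, y) B)).ncard = (hamPaths B).ncard +
      (hamPaths (inducedArcs (· ≠ x) (contractArc B x y))).ncard := by
  rw [← Set.ncard_sdiff_add_ncard_of_subset (hamPaths_mono (Set.subset_insert _ _))
    (hamPaths_finite _), add_comm, ncard_hamPaths_inducedArcs]
  congr 1
  set L := {w : List V | w.Nodup ∧ (∀ z, z ∈ w ↔ z ≠ x) ∧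
    w.IsChain fun a b => (a, b) ∈ contractArc B x y}
  have hinj : Set.InjOn (insertBefore x y) L := fun w hw w' hw' h => by
    rw [← erase_insertBefore (y := y) (fun h => (hw.2.1 x).1 h rfl),
      ← erase_insertBefore (y := y) (fun h => (hw'.2.1 x).1 h rfl), h]
  rw [← hinj.ncard_image]
  congr 1
  ext w
  constructor
  · rintro ⟨⟨hnd, hall, hc⟩, hnc⟩
    obtain ⟨P, Q, rfl⟩ := exists_eq_append_of_isChain_insert hc fun h => hnc ⟨hnd, hall, h⟩
    have hnd' : x ∉ P ++ y :: Q ∧ (P ++ y :: Q).Nodup :=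
      List.nodup_cons.1 (List.nodup_middle.1 hnd)
    obtain ⟨hP, hQ⟩ : y ∉ P ∧ y ∉ Q := by
      simpa using (List.nodup_cons.1 (List.nodup_middle.1 hnd'.2)).1
    refine ⟨P ++ y :: Q, ⟨hnd'.2, fun z => ⟨?_, fun hz => ?_⟩, ?_⟩,
      insertBefore_append_cons hP Q⟩
    · rintro hz rfl
      exact hnd'.1 hz
    · simpa [hz] using hall z
    · exact (isChain_insert_iff_contractArc hxy hP hQ).1 hc
  · rintro ⟨w, ⟨hnd, hall, hc⟩, rfl⟩
    obtain ⟨P, Q, rfl⟩ := List.append_of_mem ((hall y).2 hxy.symm)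
    obtain ⟨hP, hQ⟩ : y ∉ P ∧ y ∉ Q := by
      simpa using (List.nodup_cons.1 (List.nodup_middle.1 hnd)).1
    rw [insertBefore_append_cons hP Q]
    refine ⟨⟨?_, fun z => ?_, (isChain_insert_iff_contractArc hxy hP hQ).2 hc⟩,
      fun h => hB ?_⟩
    · exact List.nodup_middle.2 (List.nodup_cons.2 ⟨fun h => (hall x).1 h rfl, hnd⟩)
    · have := hall z
      simp only [List.mem_append, List.mem_cons] at this ⊢
      tauto
    · exact (List.isChain_append_cons_cons.1 h.2.2).2.1

theorem ncard_nodup_forall_mem [Fintype V] :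
    {w : List V | w.Nodup ∧ ∀ x, x ∈ w}.ncard = (Fintype.card V)! := by
  have : {w : List V | w.Nodup ∧ ∀ x, x ∈ w} =
      ↑(Finset.univ : Finset V).toList.permutations.toFinset := by
    ext w
    simp only [Set.mem_ofPred_eq, List.coe_toFinset, List.mem_permutations]
    constructor
    · rintro ⟨hnd, hall⟩
      exact (List.perm_ext_iff_of_nodup hnd (Finset.nodup_toList _)).2 (by simp [hall])
    · intro h
      exact ⟨h.nodup_iff.2 (Finset.nodup_toList _), fun x => h.mem_iff.2 (by simp)⟩
  rw [this, Set.ncard_coe_finset, List.toFinset_card_of_nodup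
    (List.nodup_permutations _ (Finset.nodup_toList _)), List.length_permutations,
    Finset.length_toList, Finset.card_univ]

theorem ncard_hamPaths_empty_modEq [Fintype V] :
    (hamPaths (∅ : Set (V × V))).ncard ≡
      (hamPaths (arcCompl (∅ : Set (V × V)))).ncard [MOD 2] := by
  rcases le_or_gt (Fintype.card V) 1 with hV | hV
  · rw [hamPaths_congr fun a b hab => absurd (Fintype.card_le_one_iff.1 hV a b) hab]
  · have hempty : hamPaths (∅ : Set (V × V)) = ∅ := by
      refine Set.eq_empty_of_forall_notMem fun w ⟨_, hall, hc⟩ => ?_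
      obtain ⟨a, b, hab⟩ := Fintype.exists_pair_of_one_lt_card hV
      match w, hall, hc with
      | [], hall, _ => simpa using hall a
      | [c], hall, _ =>
        have ha := hall a
        have hb := hall b
        simp only [List.mem_singleton] at ha hb
        exact hab (ha.trans hb.symm)
      | c :: d :: t, _, hc => simp at hc
    have hcompl : hamPaths (arcCompl (∅ : Set (V × V))) = {w | w.Nodup ∧ ∀ x, x ∈ w} := by
      ext w
      refine and_congr_right fun hnd => and_iff_left ?_
      exact (List.Pairwise.isChain hnd).imp fun a b hab => ⟨hab, id⟩
    rw [hempty, hcompl, ncard_nodup_forall_mem, Set.ncard_empty]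
    exact (Nat.modEq_zero_iff_dvd.2 (Nat.dvd_factorial two_pos hV)).symm

theorem arcCompl_insert_self (B : Set (V × V)) (x : V) :
    arcCompl (insert (x, x) B) = arcCompl B := by
  ext ⟨a, b⟩
  simp only [arcCompl, Set.mem_ofPred_eq, Set.mem_insert_iff, Prod.mk.injEq]
  grind

theorem hamPaths_insert_self (B : Set (V × V)) (x : V) :
    hamPaths (insert (x, x) B) = hamPaths B :=
  hamPaths_congr fun a b hab => or_iff_right fun h => hab (by simp_all)

theorem insert_arcCompl_insert {B : Set (V × V)} {x y : V} (hxy : x ≠ y) (hB : (x, y) ∉ B) :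
    insert (x, y) (arcCompl (insert (x, y) B)) = arcCompl B := by
  ext ⟨a, b⟩
  simp only [arcCompl, Set.mem_ofPred_eq, Set.mem_insert_iff, Prod.mk.injEq]
  grind

theorem hamPaths_contractArc_arcCompl {B : Set (V × V)} {x y : V} :
    hamPaths (inducedArcs (· ≠ x) (contractArc (arcCompl (insert (x, y) B)) x y)) =
      hamPaths (arcCompl (inducedArcs (· ≠ x) (contractArc B x y))) := by
  refine hamPaths_congr fun a b hab => ?_
  have ha := a.2
  have hab' : a.1 ≠ b.1 := Subtype.coe_ne_coe.2 hab
  simp only [inducedArcs, contractArc, arcCompl, Set.mem_preimage, Prod.map,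
    Set.mem_ofPred_eq, Set.mem_insert_iff, Prod.mk.injEq]
  grind

theorem ncard_hamPaths_modEq_arcCompl [Fintype V] (D : Set (V × V)) :
    (hamPaths D).ncard ≡ (hamPaths (arcCompl D)).ncard [MOD 2] := by
  induction hn : Fintype.card V using Nat.strong_induction_on generalizing V with
  | _ n ihV =>
  induction D, D.toFinite using Set.Finite.induction_on with
  | empty => exact ncard_hamPaths_empty_modEq
  | @insert e s hs _ ihD =>
  obtain ⟨x, y⟩ := e
  rcases eq_or_ne x y with rfl | hxy
  · rwa [hamPaths_insert_self, arcCompl_insert_self]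
  have hcard : Fintype.card {a // a ≠ x} < n := by
    rw [← hn]
    exact Fintype.card_subtype_lt (p := (· ≠ x)) (x := x) (by simp)
  have hdel := ncard_hamPaths_insert hxy hs
  have hdel' :=
    ncard_hamPaths_insert hxy (B := arcCompl (insert (x, y) s)) fun h => h.2 (by simp)
  rw [insert_arcCompl_insert hxy hs, hamPaths_contractArc_arcCompl] at hdel'
  have hcontr := ihV _ hcard (inducedArcs (· ≠ x) (contractArc s x y)) rfl
  simp only [Nat.ModEq] at ihD hcontr ⊢
  omega

theorem ncard_hamPaths_insert_insert [Fintype V] {D : Set (V × V)} {u v : V} (huv : u ≠ v)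
    (hu : (u, v) ∉ D) :
    (hamPaths (insert (u, v) (insert (v, u) D))).ncard + (hamPaths D).ncard =
      (hamPaths (insert (u, v) D)).ncard + (hamPaths (insert (v, u) D)).ncard := by
  have hcontr : hamPaths (inducedArcs (· ≠ u) (contractArc (insert (v, u) D) u v)) =
      hamPaths (inducedArcs (· ≠ u) (contractArc D u v)) := by
    refine hamPaths_congr fun a b hab => ?_
    have hab' : a.1 ≠ b.1 := Subtype.coe_ne_coe.2 hab
    have hb := b.2
    simp only [inducedArcs, contractArc, Set.mem_preimage, Prod.map, Set.mem_ofPred_eq,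
      Set.mem_insert_iff, Prod.mk.injEq]
    grind
  rw [ncard_hamPaths_insert huv (by simp [huv, hu]), ncard_hamPaths_insert huv hu, hcontr]
  ring

theorem isTournament_iff {T : Set (V × V)} :
    IsTournament T ↔ ∀ a b, (a, b) ∈ T ↔ a ≠ b ∧ (b, a) ∉ T := by
  refine ⟨fun hT a b => ?_, fun h => ⟨fun a ha => ((h a a).1 ha).1 rfl, fun a b _ => ?_⟩⟩
  · rcases eq_or_ne a b with rfl | hab
    · simp [hT.1 a]
    · have := xor_iff_iff_not.1 (hT.2 a b hab)
      tauto
  · have := h a b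
    exact xor_iff_iff_not.2 (by tauto)

theorem IsTournament.flip {T : Set (V × V)} (hT : IsTournament T) {u v : V} (huv : (u, v) ∈ T) :
    IsTournament (insert (v, u) (T \ {(u, v)})) := by
  rw [isTournament_iff] at hT ⊢
  intro a b
  have := hT a b
  have := hT u v
  simp only [Set.mem_insert_iff, Set.mem_sdiff, Set.mem_singleton_iff, Prod.mk.injEq]
  grind

theorem IsTournament.arcCompl_diff {T : Set (V × V)} (hT : IsTournament T) {u v : V}
    (huv : (u, v) ∈ T) :
    arcCompl (T \ {(u, v)}) = Prod.swap ⁻¹' insert (u, v) (insert (v, u) (T \ {(u, v)})) := by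
  rw [isTournament_iff] at hT
  ext ⟨a, b⟩
  have := hT a b
  have := hT u v
  simp only [arcCompl, Set.mem_ofPred_eq, Set.mem_preimage, Prod.swap_prod_mk,
    Set.mem_insert_iff, Set.mem_sdiff, Set.mem_singleton_iff, Prod.mk.injEq]
  grind

theorem IsTournament.ncard_hamPaths_flip_modEq [Fintype V] {T : Set (V × V)}
    (hT : IsTournament T) {u v : V} (huv : (u, v) ∈ T) :
    (hamPaths (insert (v, u) (T \ {(u, v)}))).ncard ≡ (hamPaths T).ncard [MOD 2] := by
  have hne : u ≠ v := fun h => hT.1 u (h ▸ huv)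
  have hsum := ncard_hamPaths_insert_insert hne (D := T \ {(u, v)}) (by simp)
  have hberge := ncard_hamPaths_modEq_arcCompl (T \ {(u, v)})
  rw [hT.arcCompl_diff huv, ncard_hamPaths_swap] at hberge
  rw [Set.insert_sdiff_singleton, Set.insert_eq_of_mem huv] at hsum
  simp only [Nat.ModEq] at hberge ⊢
  omega

theorem IsTournament.eq_of_subset {T₁ T₂ : Set (V × V)} (h₁ : IsTournament T₁)
    (h₂ : IsTournament T₂) (h : T₁ ⊆ T₂) : T₁ = T₂ := by
  refine h.antisymm fun ⟨a, b⟩ hab => ?_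
  rw [isTournament_iff] at h₁ h₂
  by_contra hab₁
  exact ((h₂ a b).1 hab).2 (h ((h₁ b a).2 ⟨((h₂ a b).1 hab).1.symm, hab₁⟩))

theorem IsTournament.ncard_hamPaths_modEq [Fintype V] {T₁ T₂ : Set (V × V)}
    (h₁ : IsTournament T₁) (h₂ : IsTournament T₂) :
    (hamPaths T₁).ncard ≡ (hamPaths T₂).ncard [MOD 2] := by
  induction hk : (T₁ \ T₂).ncard generalizing T₁ with
  | zero =>
    rw [h₁.eq_of_subset h₂ (Set.sdiff_eq_empty.1 ((Set.ncard_eq_zero (Set.toFinite _)).1 hk))]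
  | succ k ih =>
    obtain ⟨⟨u, v⟩, huv₁, huv₂⟩ :=
      Set.nonempty_of_ncard_ne_zero (hk.trans_ne k.succ_ne_zero)
    have hvu₂ : (v, u) ∈ T₂ :=
      (isTournament_iff.1 h₂ v u).2 ⟨fun h => h₁.1 u (h ▸ huv₁), huv₂⟩
    have hdiff : insert (v, u) (T₁ \ {(u, v)}) \ T₂ = (T₁ \ T₂) \ {(u, v)} := by
      ext p
      simp only [Set.mem_sdiff, Set.mem_insert_iff, Set.mem_singleton_iff]
      grind
    refine (h₁.ncard_hamPaths_flip_modEq huv₁).symm.trans (ih (h₁.flip huv₁) ?_)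
    rw [hdiff, Set.ncard_sdiff_singleton_of_mem (Set.mem_sdiff_of_mem huv₁ huv₂), hk,
      Nat.add_sub_cancel]

theorem isTournament_lt [LinearOrder V] : IsTournament {p : V × V | p.1 < p.2} :=
  isTournament_iff.2 fun _ _ =>
    ⟨fun h => ⟨h.ne, h.not_gt⟩, fun ⟨hne, h⟩ => (not_lt.1 h).lt_of_ne hne⟩

theorem ncard_hamPaths_lt [LinearOrder V] [Fintype V] :
    (hamPaths {p : V × V | p.1 < p.2}).ncard = 1 := by
  rw [Set.ncard_eq_one]
  refine ⟨Finset.univ.sort, Set.ext fun w => ⟨fun ⟨_, hall, hc⟩ => ?_, ?_⟩⟩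
  · exact (List.isChain_iff_pairwise.1 hc).eq_of_mem_iff (Finset.sortedLT_sort _).pairwise
      (by simp [hall])
  · rintro rfl
    exact ⟨Finset.sort_nodup _ _, by simp, (Finset.sortedLT_sort _).isChain⟩

end HamiltonianPaths

theorem redei_theorem_general (V : Type) [Fintype V]
    (A : Set (V × V)) (hD : IsTournament A) :
    Odd (hampCount V A) := by
  let : LinearOrder V := LinearOrder.lift' _ (Fintype.equivFin V).injective
  have h := hD.ncard_hamPaths_modEq isTournament_lt
  rwa [ncard_hamPaths_lt, ← hampCount_eq_ncard_hamPaths, Nat.ModEq, ← Nat.odd_iff] at h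

/-- **Redei's theorem.** The number of Hamiltonian paths of a tournament is odd. -/
theorem redei_theorem (V : Type) [Fintype V] [DecidableEq V]
    (A : Set (V × V)) (hD : IsTournament A) :
    Odd (hampCount V A) :=
  redei_theorem_general V A hD
end
end

section
/- (Berge's theorem) Let D=(V,A) be a digraph, and let D̄ := (V,(V×V)∖A) be its complement. Then the number of Hamiltonian paths of D̄ is congruent to the number of Hamiltonian paths of D modulo 2. Equivalently: the number of V-listings (w_1,…,w_n) with (w_i,w_{i+1}) ∉ A for all i ∈ {1,…,n−1} is congruent, modulo 2, to the number of V-listings (w_1,…,w_n) with (w_i,w_{i+1}) ∈ A for all i ∈ {1,…,n−1}. -/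
open scoped Classical

noncomputable section

/-!
An ordered path cover of `D = (V, A)` is a list of nonempty `A`-paths whose concatenation lists
every vertex exactly once. Swapping its first two paths is an involution whose fixed points are
the covers by at most one path, that is, the Hamiltonian paths of `D`. A second involution acts at
the first position where two consecutive vertices of the concatenation form an arc of `D`: it cuts
there if both vertices lie on the same path, and glues their two paths together otherwise. Its
fixed points are the covers by single vertices, no two consecutive of which form an arc: the
Hamiltonian paths of `D̄`. So both Hamiltonian path counts have the parity of the number of
ordered path covers.
-/

theorem Finset.card_modEq_two_card_filter_apply_eq {α : Type*} {s : Finset α} {f : α → α}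
    (hf : ∀ a ∈ s, f a ∈ s) (hff : ∀ a ∈ s, f (f a) = a) :
    s.card ≡ (s.filter fun a => f a = a).card [MOD 2] := by
  have hmoved : ((s.filter fun a => ¬f a = a).card : ZMod 2) = 0 := by
    rw [Finset.card_eq_sum_ones, Nat.cast_sum, Nat.cast_one]
    refine Finset.sum_involution (fun a _ => f a) (fun _ _ => by decide)
      (fun a ha _ => (Finset.mem_filter.1 ha).2) (fun a ha => ?_)
      (fun a ha => hff a (Finset.mem_filter.1 ha).1)
    obtain ⟨has, hfa⟩ := Finset.mem_filter.1 ha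
    exact Finset.mem_filter.2 ⟨hf a has, by rwa [hff a has, eq_comm]⟩
  rw [← ZMod.natCast_eq_natCast_iff,
    ← Finset.card_filter_add_card_filter_not (fun a => f a = a), Nat.cast_add, hmoved, add_zero]

theorem Set.ncard_modEq_two_ncard_sep_apply_eq {α : Type*} {s : Set α} (hs : s.Finite)
    {f : α → α} (hf : Set.MapsTo f s s) (hff : ∀ a ∈ s, f (f a) = a) :
    s.ncard ≡ {a ∈ s | f a = a}.ncard [MOD 2] := by
  lift s to Finset α using hs
  rw [Set.ncard_coe_finset]
  have := Finset.card_modEq_two_card_filter_apply_eq hf hff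
  rwa [← Set.ncard_coe_finset (s.filter _), Finset.coe_filter] at this

namespace List

variable {α : Type*}

theorem finite_setOf_length_le_forall_mem {S : Set α} (hS : S.Finite) (n : ℕ) :
    {l : List α | l.length ≤ n ∧ ∀ a ∈ l, a ∈ S}.Finite := by
  have := hS.to_subtype
  refine ((List.finite_length_le S n).image (List.map Subtype.val)).subset ?_
  rintro l ⟨hlen, hl⟩
  lift l to List S using hl
  exact ⟨l, by simpa using hlen, rfl⟩

theorem flatten_map_singleton (l : List α) : (l.map ([·])).flatten = l := by
  simp [← flatMap_def]

def swapFirstTwo : List α → List α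
  | a :: b :: l => b :: a :: l
  | l => l

theorem swapFirstTwo_involutive : Function.Involutive (swapFirstTwo (α := α))
  | [] | [_] | _ :: _ :: _ => rfl

theorem swapFirstTwo_perm : ∀ l : List α, swapFirstTwo l ~ l
  | [] | [_] => .refl _
  | _ :: _ :: _ => .swap _ _ _

theorem swapFirstTwo_eq_self_iff :
    ∀ {l : List α}, l.Nodup → (swapFirstTwo l = l ↔ l.length ≤ 1)
  | [], _ | [_], _ => by simp [swapFirstTwo]
  | a :: b :: l, h => by
    simp only [swapFirstTwo, cons.injEq, length_cons]
    have hab : a ≠ b := fun hab => (nodup_cons.1 h).1 (hab ▸ mem_cons_self)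
    grind

end List

namespace Berge

variable {V : Type*}

def IsPath (A : Set (V × V)) (p : List V) : Prop :=
  p ≠ [] ∧ p.IsChain fun a b => (a, b) ∈ A

def orderedPathCovers (A : Set (V × V)) : Set (List (List V)) :=
  {L | (∀ p ∈ L, IsPath A p) ∧ L.flatten.Nodup ∧ ∀ v, v ∈ L.flatten}

def hamPaths (A : Set (V × V)) : Set (List V) :=
  {w | w.Nodup ∧ (∀ v, v ∈ w) ∧ w.IsChain fun a b => (a, b) ∈ A}

theorem orderedPathCovers_finite [Fintype V] (A : Set (V × V)) :
    (orderedPathCovers A).Finite := by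
  refine (List.finite_setOf_length_le_forall_mem (List.finite_length_le V (Fintype.card V))
    (Fintype.card V)).subset ?_
  rintro L ⟨hL, hnd, -⟩
  refine ⟨?_, fun p hp => (List.sublist_flatten_of_mem hp).length_le.trans hnd.length_le_card⟩
  calc L.length = (L.map List.length).length := (List.length_map _).symm
    _ ≤ (L.map List.length).sum := List.length_le_sum_of_one_le _ fun n hn => by
          obtain ⟨p, hp, rfl⟩ := List.mem_map.1 hn
          exact List.length_pos_iff.2 (hL p hp).1
    _ = L.flatten.length := List.length_flatten.symm
    _ ≤ Fintype.card V := hnd.length_le_card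

theorem nodup_of_mem_orderedPathCovers {A : Set (V × V)} {L : List (List V)}
    (hL : L ∈ orderedPathCovers A) : L.Nodup := by
  refine (List.nodup_flatten.1 hL.2.1).2.imp_of_mem fun {p q} hp _ hpq hpq' => ?_
  obtain ⟨v, hv⟩ := List.exists_mem_of_ne_nil p (hL.1 p hp).1
  exact hpq hv (hpq' ▸ hv)

theorem mapsTo_swapFirstTwo (A : Set (V × V)) :
    Set.MapsTo List.swapFirstTwo (orderedPathCovers A) (orderedPathCovers A) := by
  rintro L ⟨hL, hnd, hcov⟩
  have hperm := (List.swapFirstTwo_perm L).flatten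
  exact ⟨fun p hp => hL p ((List.swapFirstTwo_perm L).mem_iff.1 hp), hperm.nodup_iff.2 hnd,
    fun v => hperm.mem_iff.2 (hcov v)⟩

theorem flatten_image_swapFirstTwo_fixed (A : Set (V × V)) :
    List.flatten '' {L ∈ orderedPathCovers A | List.swapFirstTwo L = L} = hamPaths A := by
  ext w
  constructor
  · rintro ⟨L, ⟨hL, hfix⟩, rfl⟩
    have hlen := (List.swapFirstTwo_eq_self_iff (nodup_of_mem_orderedPathCovers hL)).1 hfix
    obtain ⟨hpath, hnd, hcov⟩ := hL
    match L, hlen with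
    | [], _ => exact ⟨hnd, hcov, List.isChain_nil⟩
    | [p], _ => exact ⟨hnd, hcov, by simpa using (hpath p (by simp)).2⟩
  · rintro ⟨hnd, hcov, hchain⟩
    by_cases hw : w = []
    · subst hw
      exact ⟨[], ⟨⟨by simp, by simp, hcov⟩, rfl⟩, rfl⟩
    · refine ⟨[w], ⟨⟨?_, by simpa using hnd, by simpa using hcov⟩, rfl⟩,
        List.flatten_singleton⟩
      simpa using ⟨hw, hchain⟩

theorem injOn_flatten_swapFirstTwo_fixed (A : Set (V × V)) :
    Set.InjOn List.flatten {L ∈ orderedPathCovers A | List.swapFirstTwo L = L} := by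
  rintro L ⟨hL, hLfix⟩ M ⟨hM, hMfix⟩ h
  have hLlen := (List.swapFirstTwo_eq_self_iff (nodup_of_mem_orderedPathCovers hL)).1 hLfix
  have hMlen := (List.swapFirstTwo_eq_self_iff (nodup_of_mem_orderedPathCovers hM)).1 hMfix
  match L, M, hLlen, hMlen with
  | [], [], _, _ => rfl
  | [], [q], _, _ => exact absurd (by simpa using h.symm) (hM.1 q (by simp)).1
  | [p], [], _, _ => exact absurd (by simpa using h) (hL.1 p (by simp)).1
  | [p], [q], _, _ => simpa using h

variable (A : Set (V × V))

-- The clauses with an empty path only make `toggle` total; they never apply to a cover.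
def toggle : List (List V) → List (List V)
  | [] => []
  | [] :: L => [] :: L
  | (x :: y :: p) :: L => [x] :: (y :: p) :: L
  | [[x]] => [[x]]
  | [x] :: [] :: L => [x] :: [] :: L
  | [x] :: (y :: p) :: L =>
    if (x, y) ∈ A then (x :: y :: p) :: L else [x] :: toggle ((y :: p) :: L)

theorem flatten_toggle (L : List (List V)) : (toggle A L).flatten = L.flatten := by
  induction L using toggle.induct A <;> simp_all [toggle]

theorem isPath_of_mem_toggle {L : List (List V)} (hL : ∀ p ∈ L, IsPath A p) :
    ∀ p ∈ toggle A L, IsPath A p := by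
  induction L using toggle.induct A with
  | case3 x y p L =>
    have hxy := List.isChain_cons_cons.1 (hL _ List.mem_cons_self).2
    simp only [toggle, List.mem_cons]
    rintro q (rfl | rfl | hq)
    · exact ⟨List.cons_ne_nil _ _, List.isChain_singleton _⟩
    · exact ⟨List.cons_ne_nil _ _, hxy.2⟩
    · exact hL q (by simp [hq])
  | case6 x y p L hxy =>
    simp only [toggle, hxy, if_true, List.mem_cons]
    rintro q (rfl | hq)
    · exact ⟨List.cons_ne_nil _ _, List.isChain_cons_cons.2 ⟨hxy, (hL _ (by simp)).2⟩⟩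
    · exact hL q (by simp [hq])
  | case7 x y p L hxy ih =>
    simp only [toggle, hxy, if_false, List.mem_cons]
    rintro q (rfl | hq)
    · exact ⟨List.cons_ne_nil _ _, List.isChain_singleton _⟩
    · exact ih (fun q hq => hL q (List.mem_cons_of_mem _ hq)) q hq
  | _ => exact hL

theorem mapsTo_toggle : Set.MapsTo (toggle A) (orderedPathCovers A) (orderedPathCovers A) :=
  fun L ⟨hL, hnd, hcov⟩ => ⟨isPath_of_mem_toggle A hL, flatten_toggle A L ▸ hnd,
    flatten_toggle A L ▸ hcov⟩

theorem exists_toggle_cons_eq (x : V) (p : List V) (L : List (List V)) :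
    ∃ q M, toggle A ((x :: p) :: L) = (x :: q) :: M := by
  rcases p with _ | ⟨y, p⟩
  · rcases L with _ | ⟨_ | ⟨y, q⟩, L⟩
    · exact ⟨_, _, rfl⟩
    · exact ⟨_, _, rfl⟩
    · by_cases hxy : (x, y) ∈ A <;> simp [toggle, hxy]
  · exact ⟨_, _, rfl⟩

theorem toggle_toggle {L : List (List V)} (hL : ∀ p ∈ L, p.IsChain fun a b => (a, b) ∈ A) :
    toggle A (toggle A L) = L := by
  induction L using toggle.induct A with
  | case3 x y p L =>
    simp [toggle, (List.isChain_cons_cons.1 (hL _ List.mem_cons_self)).1]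
  | case6 x y p L hxy => simp [toggle, hxy]
  | case7 x y p L hxy ih =>
    -- the inner `toggle` keeps `y` in front, so the outer one again declines to glue `[x]` on
    obtain ⟨q, M, hM⟩ := exists_toggle_cons_eq A y p L
    have ih := ih fun q hq => hL q (List.mem_cons_of_mem _ hq)
    simp only [toggle, hxy, if_false] at ih ⊢
    rw [hM] at ih ⊢
    simpa [toggle, hxy] using ih
  | _ => rfl

theorem toggle_map_singleton {w : List V} (hw : w.IsChain fun a b => (a, b) ∉ A) :
    toggle A (w.map ([·])) = w.map ([·]) := by
  induction w with
  | nil => rfl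
  | cons x w ih =>
    rcases w with _ | ⟨y, w⟩
    · rfl
    · obtain ⟨hxy, hw⟩ := List.isChain_cons_cons.1 hw
      simp only [List.map_cons] at ih ⊢
      simp [toggle, hxy, ih hw]

theorem exists_eq_map_singleton_of_toggle_eq_self {L : List (List V)} (hL : ∀ p ∈ L, p ≠ [])
    (hfix : toggle A L = L) :
    ∃ w : List V, (w.IsChain fun a b => (a, b) ∉ A) ∧ L = w.map ([·]) := by
  induction L using toggle.induct A with
  | case1 => exact ⟨[], List.isChain_nil, rfl⟩
  | case2 L => exact absurd rfl (hL [] List.mem_cons_self)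
  | case3 x y p L => simp [toggle] at hfix
  | case4 x => exact ⟨[x], List.isChain_singleton _, rfl⟩
  | case5 x L => exact absurd rfl (hL [] (by simp))
  | case6 x y p L hxy => simp [toggle, hxy] at hfix
  | case7 x y p L hxy ih =>
    simp only [toggle, hxy, if_false, List.cons.injEq, true_and] at hfix
    obtain ⟨_ | ⟨z, w⟩, hw, hwL⟩ := ih (fun q hq => hL q (List.mem_cons_of_mem _ hq)) hfix
    · simp at hwL
    · simp only [List.map_cons, List.cons.injEq] at hwL
      obtain ⟨⟨rfl, rfl⟩, rfl⟩ := hwL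
      exact ⟨x :: y :: w, List.isChain_cons_cons.2 ⟨hxy, hw⟩, rfl⟩

theorem image_map_singleton_hamPaths_compl :
    List.map ([·]) '' hamPaths Aᶜ = {L ∈ orderedPathCovers A | toggle A L = L} := by
  ext L
  constructor
  · rintro ⟨w, ⟨hnd, hcov, hw⟩, rfl⟩
    refine ⟨⟨?_, by rwa [List.flatten_map_singleton], by rwa [List.flatten_map_singleton]⟩,
      toggle_map_singleton A hw⟩
    simp [IsPath]
  · rintro ⟨⟨hL, hnd, hcov⟩, hfix⟩
    obtain ⟨w, hw, rfl⟩ :=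
      exists_eq_map_singleton_of_toggle_eq_self A (fun p hp => (hL p hp).1) hfix
    rw [List.flatten_map_singleton] at hnd hcov
    exact ⟨w, ⟨hnd, hcov, hw⟩, rfl⟩

end Berge

open Berge

theorem berge_theorem_general (V : Type) [Fintype V] (A : Set (V × V)) :
    hampCount V Aᶜ ≡ hampCount V A [MOD 2] := by
  have hfin := orderedPathCovers_finite A
  calc hampCount V Aᶜ = {L ∈ orderedPathCovers A | toggle A L = L}.ncard := by
        rw [← image_map_singleton_hamPaths_compl,
          (List.map_injective_iff.2 List.singleton_injective).injOn.ncard_image]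
        rfl
    _ ≡ (orderedPathCovers A).ncard [MOD 2] :=
        (Set.ncard_modEq_two_ncard_sep_apply_eq hfin (mapsTo_toggle A)
          fun L hL => toggle_toggle A fun p hp => (hL.1 p hp).2).symm
    _ ≡ {L ∈ orderedPathCovers A | List.swapFirstTwo L = L}.ncard [MOD 2] :=
        Set.ncard_modEq_two_ncard_sep_apply_eq hfin (mapsTo_swapFirstTwo A)
          fun L _ => List.swapFirstTwo_involutive L
    _ = hampCount V A := by
        rw [← (injOn_flatten_swapFirstTwo_fixed A).ncard_image, flatten_image_swapFirstTwo_fixed]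
        rfl

/-- **Berge's theorem.** The number of Hamiltonian paths of the complement `D̄` is
congruent to the number of Hamiltonian paths of `D` modulo `2`. -/
theorem berge_theorem (V : Type) [Fintype V] [DecidableEq V] (A : Set (V × V)) :
    hampCount V Aᶜ ≡ hampCount V A [MOD 2] :=
  berge_theorem_general V A
end
end

section
/- Let D=(V,A) be a digraph. For each permutation σ of V set φ(σ) := ∑ (ℓ(γ)−1), summed over those cycles γ of σ that are D-cycles. Then the number of Hamiltonian paths of the complement D̄ equals ∑_{σ ∈ S_V(D,D̄)} (−1)^{φ(σ)}. -/
open scoped Classical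

noncomputable section

/-!
Put `ε(a) = -1` for `a ∉ A` and `ε(a) = 0` for `a ∈ A`. Extended by `0` outside `S_V(D,D̄)`, the
summand `(-1)^{φ(σ)}` is the product over the cycles `γ` of `σ` of
`(-1)^{ℓ(γ)-1} [γ is a D-cycle] + [γ is a D̄-cycle]`, and expanding `∏_{u ∈ γ} (1 + ε(u, σ u))`
turns this factor into `(-1)^{ℓ(γ)-1} ∑_{S ⊊ γ} ∏_{u ∈ S} ε(u, σ u)`. Multiplying over the cycles
and using `sign σ = ∏_γ (-1)^{ℓ(γ)-1}`, the right-hand side becomes the sum of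
`sign σ ∏_{u ∈ T} ε(u, σ u)` over the pairs `(σ, T)` such that `T` contains no cycle of `σ`.
For fixed `T` these terms see `σ` only on `T`, so when two points `x ≠ y` lie outside `T`,
`σ ↦ σ * swap x y` cancels them in pairs. In the remaining pairs `T = V ∖ {x}` and `σ` is a single
cycle, so `sign σ = (-1)^{|T|}`, and listing the cycle from `σ x` to `x` is a bijection onto the
Hamiltonian paths of `D̄`.
-/

namespace Finset

variable {ι R : Type*}

theorem prod_sum_powerset_eq_sum_powerset_prod_inter [DecidableEq ι] [CommSemiring R]
    (P : Finset (Finset ι)) (hP : (P : Set (Finset ι)).PairwiseDisjoint id)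
    (f : Finset ι → Finset ι → R) :
    ∏ B ∈ P, ∑ S ∈ B.powerset, f B S = ∑ T ∈ (P.biUnion id).powerset, ∏ B ∈ P, f B (T ∩ B) := by
  induction P using Finset.induction_on with
  | empty => simp
  | insert B P hB ih =>
    have hdisj : Disjoint B (P.biUnion id) := by
      refine (disjoint_biUnion_right _ _ _).2 fun B' hB' => ?_
      exact hP (mem_insert_self B P) (mem_insert_of_mem hB') (ne_of_mem_of_not_mem hB' hB).symm
    have hinter : ∀ S ⊆ B, ∀ T, ∀ B' ∈ P, (S ∪ T) ∩ B' = T ∩ B' := fun S hS T B' hB' => by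
      have : Disjoint S B' := (hdisj.mono_left hS).mono_right (subset_biUnion_of_mem id hB')
      rw [union_inter_distrib_right, disjoint_iff_inter_eq_empty.1 this, empty_union]
    rw [prod_insert hB, ih (hP.subset (by simp [Set.subset_insert])), sum_mul_sum, biUnion_insert,
      id, ← sum_product']
    refine sum_nbij' (fun p => p.1 ∪ p.2) (fun T => (T ∩ B, T ∩ P.biUnion id)) ?_ ?_ ?_ ?_ ?_
    · simp only [mem_product, mem_powerset, and_imp, Prod.forall]
      exact fun S T hS hT => union_subset_union hS hT
    · simp only [mem_product, mem_powerset]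
      exact fun T _ => ⟨inter_subset_right, inter_subset_right⟩
    · simp only [mem_product, mem_powerset, and_imp, Prod.forall, Prod.mk.injEq]
      intro S T hS hT
      rw [union_inter_distrib_right, union_inter_distrib_right, inter_eq_left.2 hS,
        inter_eq_left.2 hT, disjoint_iff_inter_eq_empty.1 (hdisj.symm.mono_left hT),
        disjoint_iff_inter_eq_empty.1 (hdisj.mono_left hS), union_empty, empty_union]
      exact ⟨rfl, rfl⟩
    · intro T hT
      rw [← inter_union_distrib_left, inter_eq_left.2 (mem_powerset.1 hT)]
    · simp only [mem_product, mem_powerset, and_imp, Prod.forall]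
      intro S T hS hT
      rw [prod_insert hB, union_inter_distrib_right, inter_eq_left.2 hS,
        disjoint_iff_inter_eq_empty.1 (hdisj.symm.mono_left hT), union_empty]
      exact congrArg _ (prod_congr rfl fun B' hB' => congrArg _ (hinter S hS T B' hB').symm)

theorem prod_sum_ssubsets_eq_sum_powerset_filter [DecidableEq ι] [CommSemiring R]
    (P : Finset (Finset ι)) (hP : (P : Set (Finset ι)).PairwiseDisjoint id) (g : ι → R) :
    ∏ B ∈ P, ∑ S ∈ B.ssubsets, ∏ i ∈ S, g i =
      ∑ T ∈ (P.biUnion id).powerset with ∀ B ∈ P, ¬ B ⊆ T, ∏ i ∈ T, g i := by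
  simp_rw [ssubsets, ← filter_ne', sum_filter]
  rw [prod_sum_powerset_eq_sum_powerset_prod_inter P hP]
  refine sum_congr rfl fun T hT => ?_
  have hT : P.biUnion (fun B => T ∩ B) = T := by
    rw [← inter_biUnion]
    exact inter_eq_left.2 (mem_powerset.1 hT)
  have hdisj : (P : Set (Finset ι)).PairwiseDisjoint (fun B => T ∩ B) :=
    hP.mono_on fun B _ => inter_subset_right
  simp_rw [prod_ite_zero, Ne, inter_eq_right]
  rw [← prod_biUnion hdisj, hT]

theorem neg_one_pow_mul_sum_ssubsets_prod [DecidableEq ι] [CommRing R] {s : Finset ι}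
    (hs : s.Nonempty) (g : ι → R) :
    (-1) ^ (#s - 1) * ∑ t ∈ s.ssubsets, ∏ i ∈ t, g i =
      (-1) ^ (#s - 1) * ∏ i ∈ s, (1 + g i) + ∏ i ∈ s, -g i := by
  obtain ⟨m, hm⟩ : ∃ m, #s = m + 1 := ⟨#s - 1, by have := hs.card_pos; omega⟩
  rw [ssubsets, sum_erase_eq_sub (mem_powerset_self s), ← prod_one_add, prod_neg, hm,
    Nat.add_sub_cancel, pow_succ]
  ring

theorem prod_ite_add_ite [CommSemiring R] (s : Finset ι) {p q : ι → Prop} [DecidablePred p]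
    [DecidablePred q] (hpq : ∀ i ∈ s, p i → ¬ q i) (a : ι → R) :
    ∏ i ∈ s, ((if p i then a i else 0) + if q i then 1 else 0) =
      if ∀ i ∈ s, p i ∨ q i then ∏ i ∈ s with p i, a i else 0 := by
  split_ifs with h
  · rw [prod_filter]
    refine prod_congr rfl fun i hi => ?_
    by_cases hp : p i
    · simp [hp, hpq i hi hp]
    · simp [hp, (h i hi).resolve_left hp]
  · push Not at h
    obtain ⟨i, hi, hp, hq⟩ := h
    exact prod_eq_zero hi (by simp [hp, hq])

end Finset

namespace List

variable {α : Type*} [DecidableEq α] {l : List α} {x : α}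

theorem toFinset_eq_univ_of_forall_mem [Fintype α] (hl : ∀ v, v ∈ l) : l.toFinset = .univ :=
  Finset.eq_univ_of_forall fun v => mem_toFinset.2 (hl v)

theorem Nodup.length_eq_card [Fintype α] (hl : l.Nodup) (hall : ∀ v, v ∈ l) :
    l.length = Fintype.card α := by
  rw [← toFinset_card_of_nodup hl, toFinset_eq_univ_of_forall_mem hall, Finset.card_univ]

theorem Nodup.toFinset_dropLast (hl : l.Nodup) (hx : l.getLast? = some x) :
    l.dropLast.toFinset = l.toFinset.erase x := by
  have happend := dropLast_append_getLast? x hx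
  have hxdrop : x ∉ l.dropLast := by
    rw [← happend, nodup_append] at hl
    exact fun h => hl.2.2 x h x (mem_singleton_self x) rfl
  ext u
  rw [mem_toFinset, Finset.mem_erase, mem_toFinset]
  constructor
  · exact fun hu => ⟨ne_of_mem_of_not_mem hu hxdrop, mem_of_mem_dropLast hu⟩
  · rintro ⟨hux, hu⟩
    rw [← happend, mem_append, mem_singleton] at hu
    exact hu.resolve_right hux

theorem Nodup.getElem_eq_formPerm_pow_apply (hl : l.Nodup) (hx : l.getLast? = some x) (i : ℕ)
    (hi : i < l.length) : l[i] = (l.formPerm ^ (i + 1)) x := by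
  rw [getLast?_eq_getElem?, getElem?_eq_some_iff] at hx
  obtain ⟨hlen, rfl⟩ := hx
  rw [formPerm_pow_apply_getElem _ hl]
  congr 1
  rw [show l.length - 1 + (i + 1) = l.length + i by omega, Nat.add_mod_left, Nat.mod_eq_of_lt hi]

theorem Nodup.isChain_iff_forall_mem_dropLast (hl : l.Nodup) {R : α → α → Prop} :
    l.IsChain R ↔ ∀ u ∈ l.dropLast, R u (l.formPerm u) := by
  rw [isChain_iff_getElem]
  constructor
  · intro h u hu
    obtain ⟨i, hi, rfl⟩ := mem_iff_getElem.1 hu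
    rw [length_dropLast] at hi
    rw [getElem_dropLast, formPerm_apply_getElem _ hl]
    simpa only [Nat.mod_eq_of_lt (show i + 1 < l.length by omega)] using h i (by omega)
  · intro h i hi
    have := h l[i] (getElem_dropLast (xs := l) (i := i) (by simp; omega) ▸ getElem_mem _)
    rw [formPerm_apply_getElem _ hl] at this
    simpa only [Nat.mod_eq_of_lt hi] using this

theorem Nodup.eq_of_formPerm_eq_of_toFinset_dropLast_eq [Fintype α] {l' : List α}
    (hl : l.Nodup) (hall : ∀ v, v ∈ l) (hl' : l'.Nodup) (hall' : ∀ v, v ∈ l')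
    (hσ : l.formPerm = l'.formPerm) (hT : l.dropLast.toFinset = l'.dropLast.toFinset) :
    l = l' := by
  cases hx : l.getLast? with
  | none =>
    rw [getLast?_eq_none_iff] at hx
    subst hx
    exact (eq_nil_iff_forall_not_mem.2 fun v _ => by simpa using hall v).symm
  | some x =>
    obtain ⟨x', hx'⟩ := Option.ne_none_iff_exists'.1
      (by simpa using ne_nil_of_mem (hall' x) : l'.getLast? ≠ none)
    rw [hl.toFinset_dropLast hx, hl'.toFinset_dropLast hx', toFinset_eq_univ_of_forall_mem hall,
      toFinset_eq_univ_of_forall_mem hall', Finset.erase_inj _ (Finset.mem_univ x)] at hT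
    subst hT
    refine ext_getElem ((hl.length_eq_card hall).trans (hl'.length_eq_card hall').symm)
      fun i h₁ h₂ => ?_
    rw [hl.getElem_eq_formPerm_pow_apply hx i h₁, hl'.getElem_eq_formPerm_pow_apply hx' i h₂, hσ]

end List

section ContainsNoCycle

open Equiv Finset

variable {V : Type*} {σ τ : Equiv.Perm V} {T : Finset V}

def ContainsNoCycle (σ : Perm V) (T : Finset V) : Prop := ∀ v, ∃ k : ℕ, (σ ^ k) v ∉ T

theorem ContainsNoCycle.of_eqOn (hσ : ContainsNoCycle σ T) (h : ∀ u ∈ T, σ u = τ u) :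
    ContainsNoCycle τ T := by
  intro v
  have hmin : ∀ j < Nat.find (hσ v), (σ ^ j) v ∈ T := fun j hj => not_not.1 (Nat.find_min _ hj)
  have hagree : ∀ j ≤ Nat.find (hσ v), (τ ^ j) v = (σ ^ j) v := by
    intro j hj
    induction j with
    | zero => rfl
    | succ j ih =>
      rw [pow_succ', pow_succ', Perm.mul_apply, Perm.mul_apply, ih (by omega),
        h _ (hmin j (by omega))]
  exact ⟨_, hagree _ le_rfl ▸ Nat.find_spec (hσ v)⟩

theorem List.Nodup.containsNoCycle_formPerm [DecidableEq V] [Finite V] {l : List V}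
    (hl : l.Nodup) : ContainsNoCycle l.formPerm l.dropLast.toFinset := by
  intro v
  by_cases hv : v ∈ l
  · cases hx : l.getLast? with
    | none => simp [List.getLast?_eq_none_iff.1 hx] at hv
    | some x =>
      obtain ⟨i, hi, rfl⟩ := List.mem_iff_getElem.1 hv
      have hcycle : l.formPerm.SameCycle l[i] x := by
        rw [hl.getElem_eq_formPerm_pow_apply hx i hi]
        exact Perm.sameCycle_pow_left.2 (Perm.SameCycle.refl _ x)
      obtain ⟨k, hk⟩ := hcycle.exists_nat_pow_eq
      exact ⟨k, by simp [hk, hl.toFinset_dropLast hx]⟩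
  · exact ⟨0, fun h => hv (List.mem_of_mem_dropLast (List.mem_toFinset.1 h))⟩

theorem Equiv.Perm.minimalPeriod_eq_card_of_forall_sameCycle [Fintype V] {x : V}
    (hx : ∀ v, σ.SameCycle x v) : Function.minimalPeriod σ x = Fintype.card V := by
  have hpos : 0 < Function.minimalPeriod σ x := by
    refine Function.IsPeriodicPt.minimalPeriod_pos (orderOf_pos σ) ?_
    simp [Function.IsPeriodicPt, Function.IsFixedPt, Perm.iterate_eq_pow, pow_orderOf_eq_one]
  rw [← Fintype.card_fin (Function.minimalPeriod σ x)]
  refine Fintype.card_of_bijective (f := fun i : Fin _ => σ^[i] x)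
    ⟨fun i j h => Fin.ext (Function.iterate_injOn_Iio_minimalPeriod i.2 j.2 h), fun v => ?_⟩
  obtain ⟨m, rfl⟩ := (hx v).exists_nat_pow_eq
  exact ⟨⟨m % _, Nat.mod_lt _ hpos⟩,
    by simp [Function.iterate_mod_minimalPeriod_eq, Perm.iterate_eq_pow]⟩

variable [Fintype V] [DecidableEq V]

theorem sum_sign_smul_eq_zero {M : Type*} [AddCommGroup M] (hT : 1 < #Tᶜ) (F : Perm V → M)
    (hF : ∀ σ τ : Perm V, (∀ u ∈ T, σ u = τ u) → F σ = F τ) :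
    ∑ σ : Perm V, (Perm.sign σ : ℤ) • F σ = 0 := by
  obtain ⟨x, hx, y, hy, hxy⟩ := one_lt_card.1 hT
  have hagree : ∀ σ : Perm V, ∀ u ∈ T, (σ * swap x y) u = σ u := fun σ u hu => by
    rw [Perm.mul_apply, swap_apply_of_ne_of_ne (ne_of_mem_of_not_mem hu (mem_compl.1 hx))
      (ne_of_mem_of_not_mem hu (mem_compl.1 hy))]
  refine sum_ninvolution (· * swap x y) (fun σ => ?_) (fun σ _ h => hxy ?_) (fun _ => mem_univ _)
    (fun σ => by simp [mul_assoc])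
  · simp [Perm.sign_mul, Perm.sign_swap hxy, hF _ _ (hagree σ)]
  · exact swap_eq_one_iff.1 (mul_eq_left.1 h)

theorem ContainsNoCycle.exists_forall_sameCycle [Nonempty V] (h : ContainsNoCycle σ T)
    (hT : #Tᶜ ≤ 1) : ∃ x, T = univ.erase x ∧ ∀ v, σ.SameCycle x v := by
  obtain ⟨v₀⟩ := ‹Nonempty V›
  obtain ⟨k₀, hk₀⟩ := h v₀
  have hcompl : ∀ u ∉ T, u = (σ ^ k₀) v₀ := fun u hu =>
    card_le_one.1 hT _ (mem_compl.2 hu) _ (mem_compl.2 hk₀)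
  refine ⟨(σ ^ k₀) v₀, ext fun u => ?_, fun v => ?_⟩
  · rw [mem_erase, and_iff_left (mem_univ u)]
    exact ⟨fun hu hux => hk₀ (hux ▸ hu), fun hux => by_contra fun hu => hux (hcompl u hu)⟩
  · obtain ⟨k, hk⟩ := h v
    exact Perm.SameCycle.symm ⟨k, by simpa using hcompl _ hk⟩

theorem Equiv.Perm.exists_formPerm_eq_of_forall_sameCycle {x : V} (hx : ∀ v, σ.SameCycle x v) :
    ∃ l : List V, l.Nodup ∧ (∀ v, v ∈ l) ∧ l.getLast? = some x ∧ l.formPerm = σ := by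
  have hperiod := σ.minimalPeriod_eq_card_of_forall_sameCycle hx
  have hmod : ∀ m, (σ ^ (m % Fintype.card V)) x = (σ ^ m) x := fun m => by
    rw [← hperiod, ← Perm.iterate_eq_pow, ← Perm.iterate_eq_pow,
      Function.iterate_mod_minimalPeriod_eq]
  have hcard : 0 < Fintype.card V := Fintype.card_pos_iff.2 ⟨x⟩
  set l := List.ofFn fun i : Fin (Fintype.card V) => (σ ^ ((i : ℕ) + 1)) x with hl
  have hnodup : l.Nodup := by
    refine List.nodup_ofFn.2 fun i j h => Fin.ext ?_
    simp only [pow_succ', Perm.mul_apply, EmbeddingLike.apply_eq_iff_eq,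
      ← Perm.iterate_eq_pow] at h
    exact Function.iterate_injOn_Iio_minimalPeriod (by simp [hperiod]) (by simp [hperiod]) h
  have hall : ∀ v, v ∈ l := by
    have : l.toFinset = univ :=
      eq_univ_of_card _ (by rw [List.toFinset_card_of_nodup hnodup, hl, List.length_ofFn])
    exact fun v => List.mem_toFinset.1 (this ▸ mem_univ v)
  refine ⟨l, hnodup, hall, ?_, Perm.ext fun v => ?_⟩
  · rw [List.getLast?_eq_getElem?, List.getElem?_eq_some_iff]
    refine ⟨by simp [hl, hcard], ?_⟩
    simp only [hl, List.getElem_ofFn, List.length_ofFn, Nat.sub_add_cancel hcard]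
    simpa using (hmod (Fintype.card V)).symm
  · obtain ⟨i, hi, rfl⟩ := List.mem_iff_getElem.1 (hall v)
    rw [List.formPerm_apply_getElem _ hnodup]
    simp only [hl, List.getElem_ofFn, List.length_ofFn]
    rw [pow_succ' σ ((i + 1) % _), Perm.mul_apply, hmod, ← Perm.mul_apply, ← pow_succ']

theorem ContainsNoCycle.exists_list (h : ContainsNoCycle σ T) (hT : #Tᶜ ≤ 1) :
    ∃ l : List V, l.Nodup ∧ (∀ v, v ∈ l) ∧ l.formPerm = σ ∧ l.dropLast.toFinset = T := by
  cases isEmpty_or_nonempty V with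
  | inl _ => exact ⟨[], List.nodup_nil, isEmptyElim, Subsingleton.elim _ _,
      (eq_empty_of_isEmpty T).symm⟩
  | inr _ =>
    obtain ⟨x, rfl, hx⟩ := h.exists_forall_sameCycle hT
    obtain ⟨l, hl, hall, hlast, hform⟩ := σ.exists_formPerm_eq_of_forall_sameCycle hx
    refine ⟨l, hl, hall, hform, ?_⟩
    rw [hl.toFinset_dropLast hlast, List.toFinset_eq_univ_of_forall_mem hall]

end ContainsNoCycle

section Cycles

open Equiv Finset

variable {V : Type} [Fintype V] [DecidableEq V] {σ : Perm V} {O T : Finset V}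

theorem mem_cyclesOf : O ∈ cyclesOf σ ↔ ∃ v, ∀ u, u ∈ O ↔ σ.SameCycle v u := by
  simp [cyclesOf, Finset.ext_iff, eq_comm]

theorem nonempty_of_mem_cyclesOf (hO : O ∈ cyclesOf σ) : O.Nonempty := by
  obtain ⟨v, hv⟩ := mem_cyclesOf.1 hO
  exact ⟨v, (hv v).2 (Perm.SameCycle.refl σ v)⟩

theorem pairwiseDisjoint_cyclesOf (σ : Perm V) :
    (cyclesOf σ : Set (Finset V)).PairwiseDisjoint id := by
  rintro O hO O' hO' hne
  obtain ⟨v, hv⟩ := mem_cyclesOf.1 hO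
  obtain ⟨w, hw⟩ := mem_cyclesOf.1 hO'
  refine disjoint_left.2 fun u hu hu' => hne (ext fun y => ?_)
  rw [hv, hw]
  have hvw := ((hv u).1 hu).trans ((hw u).1 hu').symm
  exact ⟨hvw.symm.trans, hvw.trans⟩

theorem biUnion_cyclesOf (σ : Perm V) : (cyclesOf σ).biUnion id = univ :=
  eq_univ_of_forall fun v =>
    mem_biUnion.2 ⟨_, mem_image_of_mem _ (mem_univ v), by simp [Perm.SameCycle.refl]⟩

theorem forall_not_subset_cyclesOf_iff :
    (∀ O ∈ cyclesOf σ, ¬ O ⊆ T) ↔ ContainsNoCycle σ T := by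
  constructor
  · intro h v
    obtain ⟨u, hu, huT⟩ := not_subset.1 (h _ (mem_image_of_mem _ (mem_univ v)))
    obtain ⟨k, rfl⟩ := (mem_filter.1 hu).2.exists_nat_pow_eq
    exact ⟨k, huT⟩
  · intro h O hO hOT
    obtain ⟨v, hv⟩ := mem_cyclesOf.1 hO
    obtain ⟨k, hk⟩ := h v
    exact hk (hOT ((hv _).2 (Perm.sameCycle_pow_right.2 (Perm.SameCycle.refl σ v))))

theorem cyclesOf_eq_singleton_univ {x : V} (hx : ∀ v, σ.SameCycle x v) :
    cyclesOf σ = {univ} := by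
  ext O
  rw [mem_cyclesOf, mem_singleton, eq_univ_iff_forall]
  constructor
  · rintro ⟨v, hv⟩ u
    exact (hv u).2 ((hx v).symm.trans (hx u))
  · exact fun hO => ⟨x, fun u => iff_of_true (hO u) (hx u)⟩

theorem filter_one_lt_card_cyclesOf :
    {O ∈ cyclesOf σ | 1 < #O} = σ.cycleFactorsFinset.image Perm.support := by
  ext O
  simp only [mem_filter, mem_image, mem_cyclesOf]
  constructor
  · rintro ⟨⟨v, hv⟩, hcard⟩
    have hmoved : v ∈ σ.support := by
      by_contra hfix
      refine (one_lt_card.1 hcard).elim fun a ⟨ha, b, hb, hab⟩ => hab ?_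
      rw [Perm.notMem_support] at hfix
      exact (((hv a).1 ha).eq_of_left hfix).symm.trans (((hv b).1 hb).eq_of_left hfix)
    refine ⟨σ.cycleOf v, Perm.cycleOf_mem_cycleFactorsFinset_iff.2 hmoved, ext fun u => ?_⟩
    rw [Perm.mem_support_cycleOf_iff, hv]
    exact and_iff_left hmoved
  · rintro ⟨c, hc, rfl⟩
    have hcycle := (Perm.mem_cycleFactorsFinset_iff.1 hc).1
    obtain ⟨v, hv⟩ := hcycle.nonempty_support
    refine ⟨⟨v, fun u => ?_⟩, hcycle.two_le_card_support⟩
    rw [Perm.cycle_is_cycleOf hv hc, Perm.mem_support_cycleOf_iff]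
    exact and_iff_left (Perm.mem_cycleFactorsFinset_support_le hc hv)

theorem prod_cyclesOf_neg_one_pow_eq_sign (σ : Perm V) :
    ∏ O ∈ cyclesOf σ, (-1 : ℤ) ^ (#O - 1) = Perm.sign σ := by
  have hsupport : Set.InjOn Perm.support (σ.cycleFactorsFinset : Set (Perm V)) := by
    intro c hc d hd h
    obtain ⟨v, hv⟩ := (Perm.mem_cycleFactorsFinset_iff.1 hc).1.nonempty_support
    rw [Perm.cycle_is_cycleOf hv hc, Perm.cycle_is_cycleOf (h ▸ hv : v ∈ d.support) hd]
  rw [← prod_filter_of_ne (p := fun O => 1 < #O) fun O _ h => by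
      by_contra h'; exact h (by rw [Nat.sub_eq_zero_of_le (not_lt.1 h'), pow_zero]),
    filter_one_lt_card_cyclesOf, prod_image hsupport, Perm.sign_of_cycleType', Perm.cycleType_def,
    Multiset.map_map, prod_map_val, Units.coe_prod]
  refine prod_congr rfl fun c hc => ?_
  have := (Perm.mem_cycleFactorsFinset_iff.1 hc).1.two_le_card_support
  obtain ⟨m, hm⟩ : ∃ m, #c.support = m + 1 := ⟨#c.support - 1, by omega⟩
  simp [hm, pow_succ]

theorem ContainsNoCycle.sign_eq (h : ContainsNoCycle σ T) (hT : #Tᶜ ≤ 1) :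
    (Perm.sign σ : ℤ) = (-1) ^ #T := by
  cases isEmpty_or_nonempty V with
  | inl _ => simp [Subsingleton.elim σ 1, eq_empty_of_isEmpty T]
  | inr _ =>
    obtain ⟨x, rfl, hx⟩ := h.exists_forall_sameCycle hT
    rw [← prod_cyclesOf_neg_one_pow_eq_sign, cyclesOf_eq_singleton_univ hx, prod_singleton,
      card_erase_of_mem (mem_univ x)]

end Cycles

section SignedSum

open Equiv Finset

variable {V : Type} [Fintype V] [DecidableEq V]

theorem hampCount_eq_card_containsNoCycle (B : Set (V × V)) :
    hampCount V B = #{p : Perm V × Finset V |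
      ContainsNoCycle p.1 p.2 ∧ #p.2ᶜ ≤ 1 ∧ ∀ u ∈ p.2, (u, p.1 u) ∈ B} := by
  rw [hampCount, ← Set.ncard_coe_finset]
  refine Set.ncard_congr (fun l _ => (l.formPerm, l.dropLast.toFinset)) ?_ ?_ ?_
  · rintro l ⟨hl, hall, hchain⟩
    simp only [coe_filter, mem_univ, true_and, Set.mem_ofPred_eq, List.mem_toFinset]
    refine ⟨hl.containsNoCycle_formPerm, ?_, hl.isChain_iff_forall_mem_dropLast.1 hchain⟩
    rw [card_compl, List.toFinset_card_of_nodup (hl.sublist (List.dropLast_sublist l)),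
      List.length_dropLast, hl.length_eq_card hall]
    omega
  · rintro l l' ⟨hl, hall, -⟩ ⟨hl', hall', -⟩ h
    exact hl.eq_of_formPerm_eq_of_toFinset_dropLast_eq hall hl' hall' (Prod.mk.inj h).1
      (Prod.mk.inj h).2
  · rintro ⟨σ, T⟩ hp
    simp only [coe_filter, mem_univ, true_and, Set.mem_ofPred_eq] at hp
    obtain ⟨hnoCycle, hcard, harcs⟩ := hp
    obtain ⟨l, hl, hall, hform, hdropLast⟩ := hnoCycle.exists_list hcard
    refine ⟨l, ⟨hl, hall, hl.isChain_iff_forall_mem_dropLast.2 fun u hu => ?_⟩,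
      Prod.ext hform hdropLast⟩
    rw [hform]
    exact harcs u (hdropLast ▸ List.mem_toFinset.2 hu)

theorem ite_memSVDDbar_eq_sign_mul_sum (A : Set (V × V)) (σ : Perm V) :
    (if memSVDDbar A σ then (-1 : ℤ) ^ phi A σ else 0) =
      Perm.sign σ *
        ∑ T with ContainsNoCycle σ T, ∏ u ∈ T, Aᶜ.indicator (-1 : V × V → ℤ) (u, σ u) := by
  have hexcl : ∀ O ∈ cyclesOf σ, (∀ u ∈ O, (u, σ u) ∈ A) → ¬ ∀ u ∈ O, (u, σ u) ∉ A :=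
    fun O hO hA hAc => (nonempty_of_mem_cyclesOf hO).elim fun u hu => hAc u hu (hA u hu)
  have hone_add : ∀ a, 1 + Aᶜ.indicator (-1 : V × V → ℤ) a = if a ∈ A then 1 else 0 :=
    fun a => by by_cases h : a ∈ A <;> simp [h]
  have hneg : ∀ a, -Aᶜ.indicator (-1 : V × V → ℤ) a = if a ∉ A then 1 else 0 :=
    fun a => by by_cases h : a ∈ A <;> simp [h]
  calc (if memSVDDbar A σ then (-1 : ℤ) ^ phi A σ else 0)
      = ∏ O ∈ cyclesOf σ, ((if ∀ u ∈ O, (u, σ u) ∈ A then (-1) ^ (#O - 1) else 0) +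
          if ∀ u ∈ O, (u, σ u) ∉ A then 1 else 0) := by
        rw [prod_ite_add_ite _ hexcl, prod_pow_eq_pow_sum]
        -- the two sides differ only in their `Decidable` instances
        convert rfl <;> rfl
    _ = ∏ O ∈ cyclesOf σ,
          (-1) ^ (#O - 1) * ∑ S ∈ O.ssubsets, ∏ u ∈ S, Aᶜ.indicator (-1 : V × V → ℤ) (u, σ u) := by
        refine prod_congr rfl fun O hO => ?_
        rw [neg_one_pow_mul_sum_ssubsets_prod (nonempty_of_mem_cyclesOf hO)]
        simp only [hone_add, hneg, prod_boole, mul_ite, mul_one, mul_zero]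
        convert rfl
    _ = _ := by
        rw [prod_mul_distrib, prod_cyclesOf_neg_one_pow_eq_sign,
          prod_sum_ssubsets_eq_sum_powerset_filter _ (pairwiseDisjoint_cyclesOf σ),
          biUnion_cyclesOf, powerset_univ]
        simp only [forall_not_subset_cyclesOf_iff]

theorem sum_sign_smul_ite_containsNoCycle_eq_card (B : Set (V × V)) (T : Finset V) :
    ∑ σ : Perm V, (Perm.sign σ : ℤ) •
        (if ContainsNoCycle σ T then ∏ u ∈ T, B.indicator (-1 : V × V → ℤ) (u, σ u) else 0) =
      #{σ : Perm V | ContainsNoCycle σ T ∧ #Tᶜ ≤ 1 ∧ ∀ u ∈ T, (u, σ u) ∈ B} := by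
  by_cases hT : #Tᶜ ≤ 1
  · rw [card_filter, Nat.cast_sum]
    refine sum_congr rfl fun σ _ => ?_
    by_cases hσ : ContainsNoCycle σ T
    · have hprod : ∏ u ∈ T, B.indicator (-1 : V × V → ℤ) (u, σ u) =
          if ∀ u ∈ T, (u, σ u) ∈ B then (-1) ^ #T else 0 := by
        simp only [Set.indicator_apply, Pi.neg_apply, Pi.one_apply, prod_ite_zero, prod_const]
      rw [if_pos hσ, hprod, hσ.sign_eq hT, smul_eq_mul, mul_ite, ← mul_pow]
      simp [hσ, hT]
    · simp [hσ]
  · rw [sum_sign_smul_eq_zero (not_le.1 hT) _ fun σ τ h => ?_]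
    · simp [hT]
    · have hiff : ContainsNoCycle σ T ↔ ContainsNoCycle τ T :=
        ⟨fun hσ => hσ.of_eqOn h, fun hτ => hτ.of_eqOn fun u hu => (h u hu).symm⟩
      have hprod : ∏ u ∈ T, B.indicator (-1 : V × V → ℤ) (u, σ u) =
          ∏ u ∈ T, B.indicator (-1 : V × V → ℤ) (u, τ u) :=
        prod_congr rfl fun u hu => by rw [h u hu]
      rw [hiff, hprod]

end SignedSum

/-- **Theorem (Grinberg–Stanley, Theorem 5.4 (a)).**
`#hamps(D̄) = ∑_{σ ∈ S_V(D,D̄)} (-1)^{φ(σ)}`. -/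
theorem hampCount_compl_eq_signed_sum (V : Type) [Fintype V] [DecidableEq V]
    (A : Set (V × V)) :
    (hampCount V Aᶜ : ℤ) =
      ∑ σ ∈ Finset.univ.filter (fun σ : Equiv.Perm V => memSVDDbar A σ),
        (-1 : ℤ) ^ phi A σ := by
  open Equiv Finset in
  calc (hampCount V Aᶜ : ℤ)
      = ∑ T : Finset V,
          (#{σ : Perm V | ContainsNoCycle σ T ∧ #Tᶜ ≤ 1 ∧ ∀ u ∈ T, (u, σ u) ∈ Aᶜ} : ℤ) := by
        rw [hampCount_eq_card_containsNoCycle, card_filter, Fintype.sum_prod_type_right]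
        push_cast [card_filter]
        rfl
    _ = ∑ T : Finset V, ∑ σ : Perm V, (Perm.sign σ : ℤ) •
          (if ContainsNoCycle σ T then ∏ u ∈ T, Aᶜ.indicator (-1 : V × V → ℤ) (u, σ u) else 0) :=
        sum_congr rfl fun T _ => by convert (sum_sign_smul_ite_containsNoCycle_eq_card Aᶜ T).symm
    _ = ∑ σ : Perm V, Perm.sign σ *
          ∑ T with ContainsNoCycle σ T, ∏ u ∈ T, Aᶜ.indicator (-1 : V × V → ℤ) (u, σ u) := by
        rw [sum_comm]
        simp only [sum_filter, mul_sum, smul_eq_mul]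
    _ = _ := by
        rw [sum_filter]
        exact sum_congr rfl fun σ _ => (ite_memSVDDbar_eq_sign_mul_sum A σ).symm
end
end

section
/- Let D=(V,A) be a digraph. Then the number of Hamiltonian paths of the complement D̄ is congruent modulo 2 to the cardinality of S_V(D,D̄), the set of permutations of V each of whose cycles is a D-cycle or a D̄-cycle. -/
open scoped Classical

noncomputable section

/-!
Count modulo 2, in two ways, the pairs `(σ, S)` of a permutation `σ` of `V` and a set `S ⊆ V`
containing no cycle of `σ` such that `(v, σ v)` is an arc of `D̄` for every `v ∈ S`
(`admissiblePairs`).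

Multiplying `σ` by the transposition of two points outside `S` pairs off the pairs with
`|V ∖ S| ≥ 2`. In the remaining ones `σ` is a single cycle and `S = V ∖ {z}`, so reading `σ`
from `σ z` to `z` gives a Hamiltonian path of `D̄`, and every Hamiltonian path arises this way.

For fixed `σ`, the unions of cycles of `σ` are closed under symmetric difference, so those
contained in a set `S` are odd in number iff `S` contains no cycle. Summing over `S ⊆ M` and
exchanging the sums, the number of subsets of `M` containing no cycle is congruent to
`∑ 2 ^ |M ∖ T|` over the unions of cycles `T ⊆ M`, which is odd iff `M` is a union of cycles.
For `M = {v | (v, σ v) ∉ A}` this says that `σ ∈ S_V(D, D̄)`.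
-/

open Finset
open Equiv (Perm swap)

section Parity

variable {α : Type*}

theorem Finset.card_zmod_two_eq_zero_of_involution {s : Finset α} (g : ∀ x ∈ s, α)
    (hg_mem : ∀ x hx, g x hx ∈ s) (hg_ne : ∀ x hx, g x hx ≠ x)
    (hg_invol : ∀ x hx, g (g x hx) (hg_mem x hx) = x) :
    (#s : ZMod 2) = 0 := by
  rw [card_eq_sum_ones, Nat.cast_sum]
  exact sum_involution g (fun _ _ => by decide) (fun x hx _ => hg_ne x hx) hg_mem hg_invol

variable [DecidableEq α] {P : Finset α → Prop} [DecidablePred P]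

theorem card_powerset_filter_zmod_two (h_empty : P ∅)
    (h_symmDiff : ∀ T U, P T → P U → P (symmDiff T U)) (S : Finset α) :
    (#{T ∈ S.powerset | P T} : ZMod 2) = if ∀ T ⊆ S, P T → T = ∅ then 1 else 0 := by
  split_ifs with h
  · rw [show {T ∈ S.powerset | P T} = {∅} by
      ext T
      simp only [mem_filter, mem_powerset, mem_singleton]
      exact ⟨fun hT => h T hT.1 hT.2, fun hT => hT ▸ ⟨empty_subset S, h_empty⟩⟩]
    simp
  · push Not at h
    obtain ⟨C, hCS, hC, hC_ne⟩ := h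
    -- translation by a nonempty member `C` pairs off the members below `S`
    refine card_zmod_two_eq_zero_of_involution (fun T _ => symmDiff T C) (fun T hT => ?_)
      (fun T _ => by simpa [symmDiff_eq_left] using hC_ne.ne_empty)
      (fun T _ => symmDiff_symmDiff_cancel_right C T)
    simp only [mem_filter, mem_powerset] at hT ⊢
    exact ⟨symmDiff_le (le_sup_of_le_right hT.1) (le_sup_of_le_right hCS), h_symmDiff T C hT.2 hC⟩

theorem card_powerset_filter_free_zmod_two (h_empty : P ∅)
    (h_symmDiff : ∀ T U, P T → P U → P (symmDiff T U)) (M : Finset α) :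
    (#{S ∈ M.powerset | ∀ T ⊆ S, P T → T = ∅} : ZMod 2) = if P M then 1 else 0 := by
  calc (#{S ∈ M.powerset | ∀ T ⊆ S, P T → T = ∅} : ZMod 2)
      = ∑ S ∈ M.powerset, ∑ T ∈ {T ∈ S.powerset | P T}, 1 := by
        simp only [natCast_card_filter, sum_const, nsmul_one,
          card_powerset_filter_zmod_two h_empty h_symmDiff]
    _ = ∑ T ∈ {T ∈ M.powerset | P T}, ∑ S ∈ Icc T M, 1 :=
        sum_comm' fun S T => by
          simp only [mem_powerset, mem_filter, mem_Icc]
          exact ⟨fun ⟨hSM, hTS, hT⟩ => ⟨⟨hTS, hSM⟩, hTS.trans hSM, hT⟩,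
            fun ⟨⟨hTS, hSM⟩, _, hT⟩ => ⟨hSM, hTS, hT⟩⟩
    _ = ∑ T ∈ {T ∈ M.powerset | P T}, 2 ^ (#M - #T) := by
        refine sum_congr rfl fun T hT => ?_
        rw [sum_const, nsmul_one, card_Icc_finset (mem_powerset.mp (mem_filter.mp hT).1)]
        push_cast; rfl
    _ = if P M then 1 else 0 := by
        rw [sum_filter, sum_eq_single_of_mem M (mem_powerset_self M)]
        · simp
        · intro T hT hTM
          have : 0 < #M - #T :=
            Nat.sub_pos_of_lt (card_lt_card (ssubset_of_subset_of_ne (mem_powerset.mp hT) hTM))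
          split_ifs <;> simp [zero_pow this.ne', show (2 : ZMod 2) = 0 from rfl]

end Parity

namespace Equiv.Perm

variable {α : Type*} {σ : Perm α} {T U : Finset α}

def IsInvariant (σ : Perm α) (T : Finset α) : Prop := ∀ x, σ x ∈ T ↔ x ∈ T

theorem isInvariant_empty (σ : Perm α) : σ.IsInvariant ∅ := by
  simp [IsInvariant]

theorem IsInvariant.symmDiff [DecidableEq α] (hT : σ.IsInvariant T) (hU : σ.IsInvariant U) :
    σ.IsInvariant (symmDiff T U) := by
  intro x
  simp only [mem_symmDiff, hT x, hU x]

theorem IsInvariant.zpow_apply_mem_iff (hT : σ.IsInvariant T) (k : ℤ) (x : α) :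
    (σ ^ k) x ∈ T ↔ x ∈ T := by
  induction k using Int.induction_on generalizing x with
  | zero => simp
  | succ k ih => rw [zpow_add_one, mul_apply, ih, hT]
  | pred k ih => rw [zpow_sub_one, mul_apply, ih, ← hT]; simp

theorem IsInvariant.mem_iff_of_sameCycle (hT : σ.IsInvariant T) {x y : α}
    (h : σ.SameCycle x y) : x ∈ T ↔ y ∈ T := by
  obtain ⟨k, rfl⟩ := h
  exact (hT.zpow_apply_mem_iff k x).symm

end Equiv.Perm

section AdmissiblePairs

variable {V : Type*} [Fintype V] (B : Set (V × V))

def arcFinset (σ : Perm V) : Finset V := {v | (v, σ v) ∈ B}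

variable {B} in
@[simp]
theorem mem_arcFinset {σ : Perm V} {v : V} : v ∈ arcFinset B σ ↔ (v, σ v) ∈ B := by
  simp [arcFinset]

variable [DecidableEq V]

def admissiblePairs : Finset (Perm V × Finset V) :=
  {x | x.2 ⊆ arcFinset B x.1 ∧ ∀ T ⊆ x.2, x.1.IsInvariant T → T = ∅}

theorem card_admissiblePairs_zmod_two :
    (#(admissiblePairs B) : ZMod 2) = #{σ : Perm V | σ.IsInvariant (arcFinset B σ)} := by
  rw [admissiblePairs, natCast_card_filter, Fintype.sum_prod_type, natCast_card_filter]
  refine sum_congr rfl fun σ _ => ?_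
  rw [← card_powerset_filter_free_zmod_two σ.isInvariant_empty (fun _ _ => .symmDiff),
    natCast_card_filter]
  simp only [← sum_filter]
  congr 1
  ext S
  simp

variable {B} in
theorem mul_swap_mem_admissiblePairs {σ : Perm V} {S : Finset V} (h : (σ, S) ∈ admissiblePairs B)
    {a b : V} (ha : a ∉ S) (hb : b ∉ S) : (σ * swap a b, S) ∈ admissiblePairs B := by
  simp only [admissiblePairs, mem_filter, mem_univ, true_and] at h ⊢
  have h_fix : ∀ v ∈ S, swap a b v = v := fun v hv =>
    Equiv.swap_apply_of_ne_of_ne (ne_of_mem_of_not_mem hv ha) (ne_of_mem_of_not_mem hv hb)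
  refine ⟨fun v hv => ?_, fun T hTS hT => h.2 T hTS fun v => ?_⟩
  · simpa [h_fix v hv] using h.1 hv
  · have h_swap : swap a b v ∈ T ↔ v ∈ T := by
      refine ⟨fun hv => ?_, fun hv => by rwa [h_fix v (hTS hv)]⟩
      rwa [← Equiv.swap_apply_self a b v, h_fix _ (hTS hv)]
    rw [← h_swap, ← hT (swap a b v), Perm.mul_apply, Equiv.swap_apply_self]

theorem card_admissiblePairs_zmod_two_eq_card_filter :
    (#(admissiblePairs B) : ZMod 2) = #{x ∈ admissiblePairs B | #x.2ᶜ ≤ 1} := by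
  rw [← card_filter_add_card_filter_not (fun x : Perm V × Finset V => #x.2ᶜ ≤ 1), Nat.cast_add,
    add_eq_left]
  have h_pair (S : Finset V) (hS : 1 < #Sᶜ) : ∃ p : V × V, p.1 ∉ S ∧ p.2 ∉ S ∧ p.1 ≠ p.2 := by
    obtain ⟨a, ha, b, hb, hab⟩ := one_lt_card.mp hS
    exact ⟨(a, b), mem_compl.mp ha, mem_compl.mp hb, hab⟩
  choose p hp using h_pair
  have hS {x} (hx : x ∈ {x ∈ admissiblePairs B | ¬#x.2ᶜ ≤ 1}) : 1 < #x.2ᶜ :=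
    not_le.mp (mem_filter.mp hx).2
  refine card_zmod_two_eq_zero_of_involution
    (fun x hx => (x.1 * swap (p x.2 (hS hx)).1 (p x.2 (hS hx)).2, x.2))
    (fun x hx => ?_) (fun x hx => ?_) (fun x _ => by simp [mul_assoc])
  · obtain ⟨ha, hb, -⟩ := hp x.2 (hS hx)
    obtain ⟨hx, hx'⟩ := mem_filter.mp hx
    exact mem_filter.mpr ⟨mul_swap_mem_admissiblePairs hx ha hb, hx'⟩
  · obtain ⟨-, -, hab⟩ := hp x.2 (hS hx)
    simpa [Prod.ext_iff] using hab

end AdmissiblePairs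

namespace List

variable {α : Type*} [DecidableEq α] {l l' : List α}

theorem isChain_iff_forall_mem_dropLast_formPerm (hl : l.Nodup) {R : α → α → Prop} :
    l.IsChain R ↔ ∀ x ∈ l.dropLast, R x (l.formPerm x) := by
  rw [isChain_iff_getElem]
  constructor
  · intro h x hx
    obtain ⟨i, hi, rfl⟩ := getElem_of_mem hx
    rw [length_dropLast] at hi
    rw [getElem_dropLast, formPerm_apply_getElem _ hl]
    simpa only [Nat.mod_eq_of_lt (show i + 1 < l.length by omega)] using h i (by omega)
  · intro h i hi
    have := h _ (getElem_mem (show i < l.dropLast.length by rw [length_dropLast]; omega))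
    rw [getElem_dropLast, formPerm_apply_getElem _ hl] at this
    simpa only [Nat.mod_eq_of_lt hi] using this

theorem toFinset_dropLast (hl : l.Nodup) (h : l ≠ []) :
    l.dropLast.toFinset = l.toFinset.erase (l.getLast h) := by
  have h_last : l.getLast h ∉ l.dropLast := by
    have := dropLast_append_getLast h ▸ hl
    grind
  ext x
  simp only [mem_toFinset, Finset.mem_erase]
  exact ⟨fun hx => ⟨ne_of_mem_of_not_mem hx h_last, dropLast_subset l hx⟩,
    fun hx => mem_dropLast_of_mem_of_ne_getLast hx.2 hx.1⟩

theorem eq_of_formPerm_eq_of_getLast_eq (hl : l.Nodup) (hl' : l'.Nodup)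
    (hlen : l.length = l'.length) (hσ : l.formPerm = l'.formPerm) (h : l ≠ []) (h' : l' ≠ [])
    (hlast : l.getLast h = l'.getLast h') : l = l' := by
  -- a nodup list is recovered from its last entry by iterating its `formPerm`
  have h_iter {m : List α} (hm : m.Nodup) (hne : m ≠ []) (i : ℕ) (hi : i < m.length) :
      m[i] = (m.formPerm ^ (i + 1)) (m.getLast hne) := by
    have : m.length - 1 + (i + 1) = i + m.length := by have := length_pos_iff.mpr hne; omega
    rw [getLast_eq_getElem, formPerm_pow_apply_getElem _ hm]
    simp only [this, Nat.add_mod_right, Nat.mod_eq_of_lt hi]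
  exact ext_getElem hlen fun i hi hi' => by rw [h_iter hl h i hi, h_iter hl' h' i hi', hσ, hlast]

end List

theorem exists_formPerm_eq_of_isCycleOn_univ {α : Type*} [Fintype α] [DecidableEq α]
    {σ : Perm α} (hσ : σ.IsCycleOn Set.univ) (z : α) :
    ∃ l : List α, l.Nodup ∧ (∀ x, x ∈ l) ∧ l.formPerm = σ ∧ l.getLast? = some z := by
  rw [← coe_univ] at hσ
  set n := Fintype.card α
  have hn : 0 < n := Fintype.card_pos_iff.mpr ⟨z⟩
  have h_iter {i j : ℕ} : (σ ^ i) z = (σ ^ j) z ↔ i ≡ j [MOD n] :=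
    hσ.pow_apply_eq_pow_apply (mem_univ z)
  set l := List.ofFn fun i : Fin n => (σ ^ (i + 1 : ℕ)) z
  have hl : l.Nodup := List.nodup_ofFn.mpr fun i j hij =>
    Fin.ext (((h_iter.mp hij).add_right_cancel' 1).eq_of_lt_of_lt i.isLt j.isLt)
  have hl_mem (x : α) : x ∈ l := by
    rw [← List.mem_toFinset,
      eq_univ_of_card l.toFinset (by rw [List.toFinset_card_of_nodup hl, List.length_ofFn])]
    exact mem_univ x
  refine ⟨l, hl, hl_mem, ?_, ?_⟩
  · ext x
    obtain ⟨i, hi, rfl⟩ := List.getElem_of_mem (hl_mem x)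
    rw [List.formPerm_apply_getElem _ hl]
    simp only [l, List.getElem_ofFn, List.length_ofFn, ← Perm.mul_apply, ← pow_succ']
    exact h_iter.mpr ((Nat.mod_modEq _ _).add_right 1)
  · rw [List.getLast?_eq_getElem?, List.getElem?_eq_getElem (by simp [l]; omega)]
    simp only [l, List.getElem_ofFn, List.length_ofFn, Nat.sub_add_cancel hn]
    exact congrArg some (hσ.pow_card_apply (mem_univ z))

section HamPaths

variable {V : Type*} [Fintype V] [DecidableEq V] {B : Set (V × V)} {w : List V}

variable (B) in
def IsHamPath (w : List V) : Prop :=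
  w.Nodup ∧ (∀ x, x ∈ w) ∧ w.IsChain fun a b => (a, b) ∈ B

theorem IsHamPath.toFinset_eq_univ (hw : IsHamPath B w) : w.toFinset = univ :=
  eq_univ_of_forall fun x => List.mem_toFinset.mpr (hw.2.1 x)

theorem mem_admissiblePairs_erase_iff {σ : Perm V} {z : V} :
    (σ, univ.erase z) ∈ admissiblePairs B ↔
      σ.IsCycleOn Set.univ ∧ univ.erase z ⊆ arcFinset B σ := by
  simp only [admissiblePairs, mem_filter, mem_univ, true_and]
  refine and_comm.trans (and_congr_left fun _ => ⟨fun h => ?_, fun hσ T hTz hT => ?_⟩)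
  · -- the points outside the cycle of `z` form an invariant set avoiding `z`
    have h_cycle : ∀ x, σ.SameCycle x z := by
      have := h {x | ¬σ.SameCycle x z} (fun x hx => mem_erase.mpr ⟨?_, mem_univ x⟩)
        fun x => by simp [Equiv.Perm.sameCycle_apply_left]
      · simpa [eq_empty_iff_forall_notMem] using this
      · rintro rfl
        exact (mem_filter.mp hx).2 (Equiv.Perm.SameCycle.refl σ x)
    exact ⟨Set.bijOn_univ.mpr σ.bijective, fun x _ y _ => (h_cycle x).trans (h_cycle y).symm⟩
  · refine eq_empty_of_forall_notMem fun x hx => notMem_erase z univ ?_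
    exact hTz ((hT.mem_iff_of_sameCycle (hσ.2 (Set.mem_univ x) (Set.mem_univ z))).mp hx)

def pathPair (w : List V) : Perm V × Finset V := (w.formPerm, w.dropLast.toFinset)

theorem IsHamPath.pathPair_eq (hw : IsHamPath B w) (hne : w ≠ []) :
    pathPair w = (w.formPerm, univ.erase (w.getLast hne)) := by
  rw [pathPair, List.toFinset_dropLast hw.1 hne, hw.toFinset_eq_univ]

theorem IsHamPath.pathPair_mem [Nonempty V] (hw : IsHamPath B w) :
    pathPair w ∈ {x ∈ admissiblePairs B | #x.2ᶜ ≤ 1} := by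
  have hne : w ≠ [] := List.ne_nil_of_mem (hw.2.1 (Classical.arbitrary V))
  rw [hw.pathPair_eq hne, mem_filter, mem_admissiblePairs_erase_iff]
  refine ⟨⟨?_, fun v hv => ?_⟩, by simp⟩
  · simpa [hw.2.1] using hw.1.isCycleOn_formPerm
  · have hv' : v ∈ w.dropLast := by
      rw [← List.mem_toFinset, List.toFinset_dropLast hw.1 hne, hw.toFinset_eq_univ]
      exact hv
    simpa using (List.isChain_iff_forall_mem_dropLast_formPerm hw.1).mp hw.2.2 v hv'

theorem injOn_pathPair [Nonempty V] : Set.InjOn pathPair {w | IsHamPath B w} := by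
  intro w hw w' hw' h
  have hne : w ≠ [] := List.ne_nil_of_mem (hw.2.1 (Classical.arbitrary V))
  have hne' : w' ≠ [] := List.ne_nil_of_mem (hw'.2.1 (Classical.arbitrary V))
  rw [hw.pathPair_eq hne, hw'.pathPair_eq hne', Prod.mk.injEq, erase_inj _ (mem_univ _)] at h
  refine List.eq_of_formPerm_eq_of_getLast_eq hw.1 hw'.1 ?_ h.1 hne hne' h.2
  rw [← List.toFinset_card_of_nodup hw.1, ← List.toFinset_card_of_nodup hw'.1,
    hw.toFinset_eq_univ, hw'.toFinset_eq_univ]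

theorem exists_pathPair_eq [Nonempty V] {x : Perm V × Finset V}
    (hx : x ∈ {x ∈ admissiblePairs B | #x.2ᶜ ≤ 1}) : ∃ w, IsHamPath B w ∧ pathPair w = x := by
  obtain ⟨σ, S⟩ := x
  obtain ⟨hx, hcard⟩ := mem_filter.mp hx
  obtain ⟨z, rfl⟩ : ∃ z, S = univ.erase z := by
    have : Sᶜ.Nonempty := by
      -- `univ` is an invariant set, so it is not contained in `S`
      rw [nonempty_iff_ne_empty, Ne, compl_eq_empty_iff]
      rintro rfl
      exact univ_nonempty.ne_empty ((mem_filter.mp hx).2.2 univ Subset.rfl fun _ => by simp)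
    obtain ⟨z, hz⟩ := card_eq_one.mp (le_antisymm hcard this.card_pos)
    exact ⟨z, by rw [← compl_compl S, hz, compl_singleton]⟩
  obtain ⟨hσ, hS⟩ := mem_admissiblePairs_erase_iff.mp hx
  obtain ⟨w, hnd, hcov, rfl, hlast⟩ := exists_formPerm_eq_of_isCycleOn_univ hσ z
  have hne : w ≠ [] := List.ne_nil_of_mem (hcov z)
  rw [List.getLast?_eq_some_getLast hne, Option.some_inj] at hlast
  have hw : IsHamPath B w := by
    refine ⟨hnd, hcov, (List.isChain_iff_forall_mem_dropLast_formPerm hnd).mpr fun v hv => ?_⟩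
    have hvz : v ≠ z := by
      rw [← List.mem_toFinset, List.toFinset_dropLast hnd hne, hlast] at hv
      exact (mem_erase.mp hv).1
    simpa using hS (mem_erase.mpr ⟨hvz, mem_univ v⟩)
  exact ⟨w, hw, by rw [hw.pathPair_eq hne, hlast]⟩

end HamPaths

theorem hampCount_eq_card_filter_admissiblePairs {V : Type} [Fintype V] [DecidableEq V]
    (B : Set (V × V)) : hampCount V B = #{x ∈ admissiblePairs B | #x.2ᶜ ≤ 1} := by
  change {w | IsHamPath B w}.ncard = _
  rcases isEmpty_or_nonempty V with hV | hV
  · have h_path : {w | IsHamPath B w} = {[]} := by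
      ext w
      cases w with
      | nil => simp [IsHamPath]
      | cons a _ => exact isEmptyElim a
    have h_pair : {x ∈ admissiblePairs B | #x.2ᶜ ≤ 1} = {(1, ∅)} := by
      ext x
      simp [Subsingleton.elim x (1, ∅), admissiblePairs, eq_empty_of_isEmpty]
    rw [h_path, h_pair, Set.ncard_singleton, card_singleton]
  · rw [← Set.ncard_coe_finset, ← injOn_pathPair.ncard_image]
    congr 1
    ext x
    exact ⟨fun ⟨w, hw, hwx⟩ => hwx ▸ hw.pathPair_mem, fun hx => exists_pathPair_eq hx⟩

theorem hampCount_modEq_card_isInvariant_arcFinset {V : Type} [Fintype V] [DecidableEq V]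
    (B : Set (V × V)) :
    hampCount V B ≡ #{σ : Perm V | σ.IsInvariant (arcFinset B σ)} [MOD 2] := by
  rw [← ZMod.natCast_eq_natCast_iff, hampCount_eq_card_filter_admissiblePairs,
    ← card_admissiblePairs_zmod_two_eq_card_filter, card_admissiblePairs_zmod_two]

theorem memSVDDbar_iff_isInvariant {V : Type} [Fintype V] [DecidableEq V] {A : Set (V × V)}
    {σ : Perm V} : memSVDDbar A σ ↔ σ.IsInvariant (arcFinset Aᶜ σ) := by
  simp only [memSVDDbar, cyclesOf, mem_image, mem_univ, true_and, forall_exists_index,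
    forall_apply_eq_imp_iff, mem_filter]
  refine ⟨fun h x => ?_, fun h v => ?_⟩
  · have hx := Equiv.Perm.SameCycle.refl σ x
    have hσx : σ.SameCycle x (σ x) := ⟨1, by simp⟩
    rcases h x with hA | hA <;> simp [hA x hx, hA (σ x) hσx]
  · have h_cycle {u} (hu : σ.SameCycle v u) : (v, σ v) ∈ A ↔ (u, σ u) ∈ A := by
      simpa [not_iff_not] using h.mem_iff_of_sameCycle hu
    by_cases hv : (v, σ v) ∈ A
    · exact Or.inl fun u hu => (h_cycle hu).mp hv
    · exact Or.inr fun u hu => (h_cycle hu).not.mp hv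

/-- **Theorem (Grinberg–Stanley, Theorem 5.4 (b)).**
`#hamps(D̄) ≡ |S_V(D,D̄)| (mod 2)`. -/
theorem hampCount_compl_mod_two (V : Type) [Fintype V] [DecidableEq V]
    (A : Set (V × V)) :
    hampCount V Aᶜ ≡
      (Finset.univ.filter (fun σ : Equiv.Perm V => memSVDDbar A σ)).card [MOD 2] := by
  rw [filter_congr fun σ _ => memSVDDbar_iff_isInvariant]
  exact hampCount_modEq_card_isInvariant_arcFinset Aᶜ
end
end

section
/- Let D=(V,A) be a digraph with V nonempty. Then ∑_F (−1)^{|F|} · #{σ ∈ S_V : F ⊆ A_σ} = (number of Hamiltonian paths of the complement D̄), where the sum ranges over all linear subsets F of A, S_V is the symmetric group of V, and A_σ := {(v,σ(v)) : v ∈ V}. -/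
open scoped Classical

noncomputable section

/-!
Write `[w has no arc in A]` as `∑ (-1)^|F|` over the sets `F` of arcs of the listing `w` that
lie in `A`, and swap the sums: `F` is weighted by the number of listings whose arcs contain `F`.
That number vanishes unless `F` is linear, since the maximal `F`-segments of such a listing
form a path cover with arc set `F`. A path cover is determined by its arc set, so for linear
`F` with path cover `C` the listings containing `F` are exactly the concatenations of the paths
of `C` in some order (`List.splitBy` recovers the order), `|C|!` of them. The permutations `σ`
with `F ⊆ A_σ` are those agreeing with a fixed one on the `|V| - |C|` vertices that are not
the end of their path, again `|C|!` of them.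
-/

namespace List

variable {α : Type*} {R : α → α → Prop} {l : List α} {L : List (List α)} {s t : List α}
  {a b c x : α}

theorem pair_infix_cons_iff :
    [a, b] <:+: x :: l ↔ (x = a ∧ l.head? = some b) ∨ [a, b] <:+: l := by
  rw [infix_cons_iff, cons_prefix_cons]
  refine or_congr_left ?_
  cases l <;> simp [eq_comm]

theorem mem_zip_tail_iff_pair_infix : (a, b) ∈ l.zip l.tail ↔ [a, b] <:+: l := by
  induction l with
  | nil => simp
  | cons x t ih =>
    rw [pair_infix_cons_iff, ← ih]
    cases t <;> simp [eq_comm, and_comm]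

theorem isChain_iff_forall_pair_infix : IsChain R l ↔ ∀ a b, [a, b] <:+: l → R a b :=
  ⟨fun h _ _ hab => isChain_pair.mp (h.infix hab), fun h => (isChain_isInfix l).imp h⟩

theorem Nodup.eq_of_pair_infix_of_pair_infix (hl : l.Nodup) (hb : [a, b] <:+: l)
    (hc : [a, c] <:+: l) : b = c := by
  induction l with
  | nil => simp at hb
  | cons x t ih =>
    rw [nodup_cons] at hl
    rw [pair_infix_cons_iff] at hb hc
    rcases hb with ⟨rfl, hb⟩ | hb <;> rcases hc with ⟨hxa, hc⟩ | hc
    · simpa [hb] using hc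
    · exact absurd (hc.subset mem_cons_self) hl.1
    · exact absurd (hxa ▸ hb.subset mem_cons_self) hl.1
    · exact ih hl.2 hb hc

theorem Nodup.not_pair_infix_head (hl : (x :: l).Nodup) : ¬[a, x] <:+: x :: l := by
  rw [pair_infix_cons_iff]
  rintro (⟨-, h⟩ | h)
  · exact (nodup_cons.mp hl).1 (mem_of_mem_head? h)
  · exact (nodup_cons.mp hl).1 (h.subset (by simp))

theorem Nodup.not_getLast_pair_infix (hl : l.Nodup) (hne : l ≠ []) :
    ¬[l.getLast hne, b] <:+: l := by
  obtain ⟨t, y, rfl⟩ := (eq_nil_or_concat' l).resolve_left hne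
  intro h
  have hr : [b, y] <:+: y :: t.reverse := by simpa using h.reverse
  exact Nodup.not_pair_infix_head (by simpa using nodup_reverse.mpr hl) hr

theorem exists_pair_infix_of_ne_head (hx : x ∈ l) (hne : l ≠ []) (h : x ≠ l.head hne) :
    ∃ u, [u, x] <:+: l := by
  induction l with
  | nil => simp at hne
  | cons y t ih =>
    obtain _ | ⟨z, t'⟩ := t
    · simp_all
    by_cases hxz : x = z
    · exact ⟨y, by simp [pair_infix_cons_iff, hxz]⟩
    · obtain ⟨u, hu⟩ := ih (by simp_all) (cons_ne_nil _ _) hxz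
      exact ⟨u, infix_cons hu⟩

theorem exists_pair_infix_of_ne_getLast (hx : x ∈ l) (hne : l ≠ []) (h : x ≠ l.getLast hne) :
    ∃ v, [x, v] <:+: l := by
  obtain ⟨v, hv⟩ := exists_pair_infix_of_ne_head (mem_reverse.mpr hx) (by simpa using hne)
    (by simpa using h)
  exact ⟨v, by simpa using hv.reverse⟩

theorem IsChain.eq_of_forall_not_rel_getLast (hR : ∀ a b c, R a b → R a c → b = c)
    {l₁ l₂ : List α} (h₁ : IsChain R (a :: l₁)) (h₂ : IsChain R (a :: l₂))
    (m₁ : ∀ b, ¬R ((a :: l₁).getLast (cons_ne_nil _ _)) b)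
    (m₂ : ∀ b, ¬R ((a :: l₂).getLast (cons_ne_nil _ _)) b) : l₁ = l₂ := by
  induction l₁ generalizing a l₂ with
  | nil =>
    obtain _ | ⟨c, l₂⟩ := l₂
    · rfl
    · exact absurd (isChain_cons_cons.mp h₂).1 (m₁ c)
  | cons b l₁ ih =>
    obtain _ | ⟨c, l₂⟩ := l₂
    · exact absurd (isChain_cons_cons.mp h₁).1 (m₂ b)
    rw [isChain_cons_cons] at h₁ h₂
    obtain rfl := hR _ _ _ h₁.1 h₂.1
    rw [getLast_cons (cons_ne_nil _ _)] at m₁ m₂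
    rw [ih h₁.2 h₂.2 m₁ m₂]

theorem Nodup.eq_of_mem_flatten (h : L.flatten.Nodup) (hs : s ∈ L) (ht : t ∈ L) (hxs : x ∈ s)
    (hxt : x ∈ t) : s = t := by
  have : Std.Symm (@Disjoint α) := ⟨fun _ _ h => h.symm⟩
  by_contra hne
  exact (nodup_flatten.mp h).2.forall hs ht hne hxs hxt

theorem Nodup.of_flatten (h : L.flatten.Nodup) (hL : [] ∉ L) : L.Nodup :=
  (nodup_flatten.mp h).2.imp_of_mem fun hs _ hdisj heq => by
    obtain ⟨x, hx⟩ := exists_mem_of_ne_nil _ fun h => hL (h ▸ hs)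
    exact hdisj hx (heq ▸ hx)

theorem exists_mem_splitBy_pair_infix (r : α → α → Bool) (h : [a, b] <:+: l) (hab : r a b) :
    ∃ s ∈ l.splitBy r, [a, b] <:+: s := by
  rw [← flatten_splitBy r l] at h
  have hn := nil_notMem_splitBy r l
  have hc := isChain_getLast_head_splitBy r l
  generalize l.splitBy r = L at h hn hc ⊢
  induction L with
  | nil => simp at h
  | cons s L ih =>
    rw [flatten_cons, infix_append_iff_ne_nil] at h
    rcases h with h | h | ⟨l₁, l₂, h₁, h₂, heq, hs, hL⟩
    · exact ⟨s, mem_cons_self, h⟩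
    · obtain ⟨t, ht, h⟩ := ih h (by simp_all) hc.tail
      exact ⟨t, mem_cons_of_mem _ ht, h⟩
    · -- `[a, b]` straddles the junction of two segments, which `splitBy` leaves unrelated
      exfalso
      obtain ⟨rfl, rfl⟩ : l₁ = [a] ∧ l₂ = [b] := by
        rcases l₁ with _ | ⟨x, _ | ⟨y, l₁⟩⟩ <;> simp_all
      obtain _ | ⟨t, L⟩ := L
      · simp at hL
      have ht : t ≠ [] := fun h => hn (by simp [h])
      obtain ⟨hs', ht', hr⟩ := (isChain_cons_cons.mp hc).1
      rw [singleton_suffix_iff_getLast?_eq_some, getLast?_eq_some_getLast hs',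
        Option.some_inj] at hs
      rw [singleton_prefix_iff_head?_eq_some, flatten_cons, head?_append_of_ne_nil _ ht,
        head?_eq_some_head ht', Option.some_inj] at hL
      simp_all

theorem formPerm_apply_of_pair_infix [DecidableEq α] (hl : l.Nodup) (h : [a, b] <:+: l) :
    l.formPerm a = b := by
  induction l with
  | nil => simp at h
  | cons x t ih =>
    obtain _ | ⟨y, t⟩ := t
    · exact absurd h.length_le (by simp)
    rw [formPerm_cons_cons, Equiv.Perm.mul_apply]
    rw [pair_infix_cons_iff] at h
    rcases h with ⟨rfl, h⟩ | h
    · obtain rfl : y = b := by simpa using h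
      rw [formPerm_apply_of_notMem (nodup_cons.mp hl).1, Equiv.swap_apply_left]
    · rw [ih (nodup_cons.mp hl).2 h]
      refine Equiv.swap_apply_of_ne_of_ne ?_ ?_
      · rintro rfl
        exact (nodup_cons.mp hl).1 (h.subset (by simp))
      · rintro rfl
        exact (nodup_cons.mp hl).2.not_pair_infix_head h

end List

open List Finset
open scoped Nat

section PathCover

variable {V : Type} {C C' : Set (List V)} {p q : List V} {a b c : V}

theorem mem_arcsList_iff : (a, b) ∈ arcsList p ↔ [a, b] <:+: p :=
  List.mem_zip_tail_iff_pair_infix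

theorem mem_arcsCover_iff : (a, b) ∈ arcsCover C ↔ ∃ p ∈ C, [a, b] <:+: p := by
  simp [arcsCover, mem_arcsList_iff]

theorem isChain_arcsCover_of_mem (hp : p ∈ C) : p.IsChain fun a b => (a, b) ∈ arcsCover C :=
  isChain_iff_forall_pair_infix.mpr fun _ _ h => mem_arcsCover_iff.mpr ⟨p, hp, h⟩

namespace IsPathCover

variable (hC : IsPathCover V C)
include hC

theorem eq_of_mem (hp : p ∈ C) (hq : q ∈ C) (hap : a ∈ p) (haq : a ∈ q) : p = q :=
  (hC.2 a).unique ⟨hp, hap⟩ ⟨hq, haq⟩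

theorem eq_of_mem_arcsCover (hab : (a, b) ∈ arcsCover C) (hac : (a, c) ∈ arcsCover C) :
    b = c := by
  obtain ⟨p, hp, hb⟩ := mem_arcsCover_iff.mp hab
  obtain ⟨q, hq, hc⟩ := mem_arcsCover_iff.mp hac
  obtain rfl := hC.eq_of_mem hp hq (hb.subset mem_cons_self) (hc.subset mem_cons_self)
  exact (hC.1 p hp).2.eq_of_pair_infix_of_pair_infix hb hc

theorem notMem_arcsCover_head (hp : p ∈ C) (hne : p ≠ []) :
    (a, p.head hne) ∉ arcsCover C := by
  rw [mem_arcsCover_iff]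
  rintro ⟨q, hq, h⟩
  obtain rfl := hC.eq_of_mem hp hq (head_mem hne) (h.subset (by simp))
  obtain ⟨x, t, rfl⟩ := exists_cons_of_ne_nil hne
  exact (hC.1 _ hp).2.not_pair_infix_head h

theorem getLast_notMem_arcsCover (hp : p ∈ C) (hne : p ≠ []) :
    (p.getLast hne, b) ∉ arcsCover C := by
  rw [mem_arcsCover_iff]
  rintro ⟨q, hq, h⟩
  obtain rfl := hC.eq_of_mem hp hq (getLast_mem hne) (h.subset (by simp))
  exact (hC.1 _ hp).2.not_getLast_pair_infix hne h

theorem subset_of_arcsCover_eq (hC' : IsPathCover V C') (h : arcsCover C = arcsCover C') :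
    C ⊆ C' := by
  intro p hp
  obtain ⟨x, t, rfl⟩ := exists_cons_of_ne_nil (hC.1 p hp).1
  obtain ⟨q, ⟨hq, hxq⟩, -⟩ := hC'.2 x
  obtain ⟨y, s, rfl⟩ := exists_cons_of_ne_nil (hC'.1 q hq).1
  obtain rfl : x = y := by
    by_contra hxy
    obtain ⟨u, hu⟩ := exists_pair_infix_of_ne_head hxq (cons_ne_nil _ _) hxy
    exact hC.notMem_arcsCover_head hp (cons_ne_nil _ _)
      (h ▸ mem_arcsCover_iff.mpr ⟨_, hq, hu⟩)
  obtain rfl := IsChain.eq_of_forall_not_rel_getLast (R := fun a b => (a, b) ∈ arcsCover C)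
    (fun _ _ _ => hC.eq_of_mem_arcsCover)
    (isChain_arcsCover_of_mem hp) (h ▸ isChain_arcsCover_of_mem hq)
    (fun _ => hC.getLast_notMem_arcsCover hp _) (fun _ => h ▸ hC'.getLast_notMem_arcsCover hq _)
  exact hq

theorem eq_of_arcsCover_eq (hC' : IsPathCover V C') (h : arcsCover C = arcsCover C') :
    C = C' :=
  (hC.subset_of_arcsCover_eq hC' h).antisymm (hC'.subset_of_arcsCover_eq hC h.symm)

theorem finite [Fintype V] : C.Finite :=
  (List.finite_length_le V (Fintype.card V)).subset fun p hp => (hC.1 p hp).2.length_le_card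

theorem card_compl_image_fst [Fintype V] [DecidableEq V] (hfin : C.Finite) {G : Finset (V × V)}
    (hG : ↑G = arcsCover C) : #(G.image Prod.fst)ᶜ = #hfin.toFinset := by
  symm
  refine Finset.card_bij (fun p hp => p.getLast (hC.1 p (hfin.mem_toFinset.mp hp)).1)
    (fun p hp => ?_) (fun p hp q hq h => ?_) (fun x hx => ?_)
  · simp only [mem_compl, mem_image, not_exists, not_and]
    rintro ⟨u, v⟩ huv rfl
    exact hC.getLast_notMem_arcsCover (hfin.mem_toFinset.mp hp) _ (hG ▸ Finset.mem_coe.mpr huv)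
  · exact hC.eq_of_mem (hfin.mem_toFinset.mp hp) (hfin.mem_toFinset.mp hq) (getLast_mem _)
      (by rw [h]; exact getLast_mem _)
  · obtain ⟨p, ⟨hp, hxp⟩, -⟩ := hC.2 x
    refine ⟨p, hfin.mem_toFinset.mpr hp, ?_⟩
    by_contra hne
    obtain ⟨v, hv⟩ := exists_pair_infix_of_ne_getLast hxp (hC.1 p hp).1 (Ne.symm hne)
    have hxv : (x, v) ∈ G := by
      rw [← Finset.mem_coe, hG, mem_arcsCover_iff]
      exact ⟨p, hp, hv⟩
    exact (mem_compl.mp hx) (mem_image.mpr ⟨_, hxv, rfl⟩)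

end IsPathCover

end PathCover

section Segments

variable {V : Type} {l : List V}

theorem isPathCover_splitBy (hl : l.Nodup) (hV : ∀ x, x ∈ l) (r : V → V → Bool) :
    IsPathCover V {s | s ∈ l.splitBy r} := by
  rw [← flatten_splitBy r l] at hl
  refine ⟨fun s hs => ⟨ne_nil_of_mem_splitBy hs, (nodup_flatten.mp hl).1 s hs⟩, fun x => ?_⟩
  obtain ⟨s, hs, hxs⟩ := mem_flatten.mp (flatten_splitBy r l ▸ hV x)
  exact ⟨s, ⟨hs, hxs⟩, fun t ht => hl.eq_of_mem_flatten ht.1 hs ht.2 hxs⟩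

theorem arcsCover_splitBy (G : Set (V × V)) :
    arcsCover {s | s ∈ l.splitBy fun a b => decide ((a, b) ∈ G)} = arcsList l ∩ G := by
  ext ⟨a, b⟩
  simp only [mem_arcsCover_iff, Set.mem_ofPred_eq, Set.mem_inter_iff, mem_arcsList_iff]
  constructor
  · rintro ⟨s, hs, h⟩
    refine ⟨h.trans (flatten_splitBy _ l ▸ infix_of_mem_flatten hs), ?_⟩
    simpa using isChain_pair.mp ((isChain_of_mem_splitBy hs).infix h)
  · rintro ⟨h, hab⟩
    exact exists_mem_splitBy_pair_infix _ h (by simpa using hab)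

theorem isLinear_of_subset_arcsList (hl : l.Nodup) (hV : ∀ x, x ∈ l) {G : Set (V × V)}
    (hG : G ⊆ arcsList l) : IsLinear V G :=
  ⟨_, isPathCover_splitBy hl hV _, by rw [arcsCover_splitBy, Set.inter_eq_right.mpr hG]⟩

end Segments

section Listings

variable {α : Type*} [DecidableEq α] {s : Finset α} {l : List α}

def listings (s : Finset α) : Finset (List α) := s.toList.permutations.toFinset

theorem mem_listings : l ∈ listings s ↔ l.Nodup ∧ ∀ x, x ∈ l ↔ x ∈ s := by
  rw [listings, List.mem_toFinset, List.mem_permutations]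
  constructor
  · intro hp
    exact ⟨hp.nodup_iff.mpr (nodup_toList s), fun x => by rw [hp.mem_iff, mem_toList]⟩
  · rintro ⟨hnd, hmem⟩
    exact (perm_ext_iff_of_nodup hnd (nodup_toList s)).mpr fun x => by rw [hmem, mem_toList]

theorem mem_listings_univ [Fintype α] : l ∈ listings univ ↔ l.Nodup ∧ ∀ x, x ∈ l := by
  simp [mem_listings]

theorem card_listings : #(listings s) = (#s)! := by
  rw [listings, toFinset_card_of_nodup (nodup_permutations _ (nodup_toList s)),
    length_permutations, length_toList]

end Listings

section Count

variable {V : Type} [Fintype V] [DecidableEq V] {C : Set (List V)}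

theorem IsPathCover.flatten_mem_listings (hC : IsPathCover V C) (hfin : C.Finite)
    {L : List (List V)} (hL : L ∈ listings hfin.toFinset) :
    L.flatten ∈ listings univ ∧ arcsCover C ⊆ arcsList L.flatten := by
  simp only [mem_listings, Set.Finite.mem_toFinset] at hL
  refine ⟨mem_listings_univ.mpr ⟨nodup_flatten.mpr ⟨fun p hp => (hC.1 p ((hL.2 p).mp hp)).2, ?_⟩,
    fun x => ?_⟩, ?_⟩
  · exact hL.1.imp_of_mem fun hp hq hpq x hxp hxq =>
      hpq (hC.eq_of_mem ((hL.2 _).mp hp) ((hL.2 _).mp hq) hxp hxq)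
  · obtain ⟨p, ⟨hp, hxp⟩, -⟩ := hC.2 x
    exact mem_flatten.mpr ⟨p, (hL.2 p).mpr hp, hxp⟩
  · rintro ⟨a, b⟩ hab
    obtain ⟨p, hp, h⟩ := mem_arcsCover_iff.mp hab
    exact mem_arcsList_iff.mpr (h.trans (infix_of_mem_flatten ((hL.2 p).mpr hp)))

theorem IsPathCover.card_filter_listings (hC : IsPathCover V C) (hfin : C.Finite) :
    #{w ∈ listings univ | arcsCover C ⊆ arcsList w} = #(listings hfin.toFinset) := by
  set r : V → V → Bool := fun a b => decide ((a, b) ∈ arcsCover C)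
  refine card_nbij' (splitBy r) flatten (fun w hw => ?_) (fun L hL => ?_)
    (fun w _ => flatten_splitBy r w) (fun L hL => ?_)
  · obtain ⟨hw, hsub⟩ := Finset.mem_filter.mp hw
    obtain ⟨hnd, hV⟩ := mem_listings_univ.mp hw
    have hseg : {s | s ∈ w.splitBy r} = C :=
      (isPathCover_splitBy hnd hV r).eq_of_arcsCover_eq hC
        (by rw [arcsCover_splitBy, Set.inter_eq_right.mpr hsub])
    refine mem_listings.mpr ⟨(flatten_splitBy r w ▸ hnd).of_flatten (nil_notMem_splitBy r w),
      fun s => ?_⟩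
    rw [Set.Finite.mem_toFinset, ← hseg]
    rfl
  · exact Finset.mem_filter.mpr (hC.flatten_mem_listings hfin hL)
  · have hL : ∀ p, p ∈ L ↔ p ∈ C := by simpa using (mem_listings.mp hL).2
    refine splitBy_flatten (fun h => (hC.1 [] ((hL []).mp h)).1 rfl)
      (fun p hp => by simpa [r] using isChain_arcsCover_of_mem ((hL p).mp hp)) ?_
    refine Pairwise.isChain (pairwise_of_forall_mem_list fun p hp q hq => ?_)
    refine ⟨(hC.1 p ((hL p).mp hp)).1, (hC.1 q ((hL q).mp hq)).1, ?_⟩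
    simpa [r] using hC.notMem_arcsCover_head ((hL q).mp hq) _

end Count

section Permutations

open Equiv

theorem mem_ApermSet_iff {V : Type} {σ : Perm V} {a b : V} :
    (a, b) ∈ ApermSet σ ↔ σ a = b := by
  simp [ApermSet]

theorem card_perm_eqOn {α : Type*} [Fintype α] [DecidableEq α] (σ₀ : Perm α) (D : Finset α) :
    Nat.card {σ : Perm α // ∀ x ∈ D, σ x = σ₀ x} = (#Dᶜ)! :=
  calc Nat.card {σ : Perm α // ∀ x ∈ D, σ x = σ₀ x}
      = Nat.card {τ : Perm α // ∀ x, ¬x ∉ D → τ x = x} :=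
        Nat.card_congr <| (Equiv.mulLeft σ₀⁻¹).subtypeEquiv fun σ => by
          simp only [not_not, coe_mulLeft, Perm.mul_apply, Perm.inv_eq_iff_eq]
    _ = Nat.card (Perm {x // x ∉ D}) := Nat.card_congr (Perm.subtypeEquivSubtypePerm _).symm
    _ = (#Dᶜ)! := by simp [Fintype.card_perm, card_compl]

theorem ncard_setOf_subset_ApermSet {V : Type} [Fintype V] [DecidableEq V] {σ₀ : Perm V}
    {G : Finset (V × V)} (hσ₀ : ↑G ⊆ ApermSet σ₀) :
    Set.ncard {σ : Perm V | ↑G ⊆ ApermSet σ} = (#(G.image Prod.fst)ᶜ)! := by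
  rw [← card_perm_eqOn σ₀, ← Nat.card_coe_set_eq]
  refine Nat.card_congr (Equiv.subtypeEquivRight fun σ => ?_)
  have hG : ∀ a b, (a, b) ∈ G → σ₀ a = b := fun a b h => mem_ApermSet_iff.mp (hσ₀ h)
  simp only [Set.mem_ofPred_eq, Set.subset_def, Finset.mem_coe, mem_image, Prod.forall,
    mem_ApermSet_iff]
  constructor
  · rintro h x ⟨⟨_, b⟩, hxb, rfl⟩
    rw [h _ _ hxb, hG _ _ hxb]
  · intro h a b hab
    rw [h a ⟨_, hab, rfl⟩, hG _ _ hab]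

end Permutations

theorem ncard_perm_eq_card_filter_listings {V : Type} [Fintype V] [DecidableEq V]
    {G : Finset (V × V)} (hG : IsLinear V ↑G) :
    Set.ncard {σ : Equiv.Perm V | ↑G ⊆ ApermSet σ} =
      #{w ∈ listings univ | (↑G : Set (V × V)) ⊆ arcsList w} := by
  obtain ⟨C, hC, hGC⟩ := hG
  have hfin := hC.finite
  obtain ⟨hw₀, hGw₀⟩ := hC.flatten_mem_listings hfin
    (mem_listings.mpr ⟨nodup_toList hfin.toFinset, fun _ => mem_toList⟩)
  rw [← hGC] at hGw₀
  have hσ₀ : ↑G ⊆ ApermSet (hfin.toFinset.toList.flatten.formPerm) := fun ⟨_, _⟩ hab =>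
    mem_ApermSet_iff.mpr <| formPerm_apply_of_pair_infix (mem_listings_univ.mp hw₀).1 <|
      mem_arcsList_iff.mp (hGw₀ hab)
  rw [ncard_setOf_subset_ApermSet hσ₀, hC.card_compl_image_fst hfin hGC, ← card_listings,
    ← hC.card_filter_listings hfin, hGC]

theorem card_filter_eq_empty_eq_sum {ι β : Type*} [Fintype β] [DecidableEq β] (s : Finset ι)
    (S : ι → Finset β) :
    (#{i ∈ s | S i = ∅} : ℤ) = ∑ t : Finset β, (-1) ^ #t * (#{i ∈ s | t ⊆ S i} : ℤ) :=
  calc (#{i ∈ s | S i = ∅} : ℤ)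
      = ∑ i ∈ s, ∑ t ∈ (S i).powerset, (-1 : ℤ) ^ #t := by
        simp_rw [sum_powerset_neg_one_pow_card]
        rw [sum_boole]
    _ = ∑ i ∈ s, ∑ t : Finset β, if t ⊆ S i then (-1 : ℤ) ^ #t else 0 := by
        refine sum_congr rfl fun i _ => ?_
        rw [← sum_filter]
        congr 1
        ext t
        simp
    _ = ∑ t : Finset β, ∑ i ∈ s, if t ⊆ S i then (-1 : ℤ) ^ #t else 0 := sum_comm
    _ = _ := sum_congr rfl fun t _ => by rw [← sum_filter, sum_const, nsmul_eq_mul, mul_comm]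

theorem hampCount_eq_card_filter_listings {V : Type} [Fintype V] [DecidableEq V]
    (B : Set (V × V)) : hampCount V B = #{w ∈ listings univ | arcsList w ⊆ B} := by
  rw [hampCount, ← Set.ncard_coe_finset]
  congr 1
  ext w
  simp only [Set.mem_ofPred_eq, coe_filter, mem_listings_univ, and_assoc]
  refine and_congr_right' (and_congr_right' (isChain_iff_forall_pair_infix.trans ?_))
  exact ⟨fun h ⟨a, b⟩ hab => h a b (mem_arcsList_iff.mp hab),
    fun h a b hab => h (mem_arcsList_iff.mpr hab)⟩

theorem hamps_by_linear_subsets_general (V : Type) [Fintype V] (A : Set (V × V)) :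
    ∑ F ∈ Finset.univ.filter
        (fun F : Finset (V × V) =>
          (↑F : Set (V × V)) ⊆ A ∧ IsLinear V (↑F : Set (V × V))),
      (-1 : ℤ) ^ F.card *
        (Set.ncard {σ : Equiv.Perm V | (↑F : Set (V × V)) ⊆ ApermSet σ} : ℤ)
      = (hampCount V Aᶜ : ℤ) := by
  set S : List V → Finset (V × V) := fun w => {e ∈ (w.zip w.tail).toFinset | e ∈ A}
  have hS : ∀ w (F : Finset (V × V)), F ⊆ S w ↔ ↑F ⊆ arcsList w ∧ ↑F ⊆ A := by
    intro w F
    simp only [S, Finset.subset_iff, Set.subset_def, Finset.mem_filter, List.mem_toFinset,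
      Finset.mem_coe, arcsList, Set.mem_ofPred_eq]
    exact ⟨fun h => ⟨fun e he => (h he).1, fun e he => (h he).2⟩,
      fun h e he => ⟨h.1 e he, h.2 e he⟩⟩
  calc _ = ∑ F ∈ univ.filter fun F : Finset (V × V) => ↑F ⊆ A ∧ IsLinear V ↑F,
        (-1) ^ #F * (#{w ∈ listings univ | F ⊆ S w} : ℤ) := by
        refine sum_congr rfl fun F hF => ?_
        rw [ncard_perm_eq_card_filter_listings (mem_filter.mp hF).2.2]
        congr 3
        exact filter_congr fun w _ => by simp [hS, (mem_filter.mp hF).2.1]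
    _ = ∑ F, (-1) ^ #F * (#{w ∈ listings univ | F ⊆ S w} : ℤ) := by
        refine sum_filter_of_ne fun F _ hF => ?_
        obtain ⟨w, hw, hFw⟩ : ∃ w ∈ listings univ, F ⊆ S w := by simpa using hF
        obtain ⟨hnd, hV⟩ := mem_listings_univ.mp hw
        exact ⟨((hS w F).mp hFw).2, isLinear_of_subset_arcsList hnd hV ((hS w F).mp hFw).1⟩
    _ = #{w ∈ listings univ | S w = ∅} := (card_filter_eq_empty_eq_sum _ _).symm
    _ = hampCount V Aᶜ := by
        rw [hampCount_eq_card_filter_listings]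
        congr 2
        exact filter_congr fun w _ => by simp [S, Finset.filter_eq_empty_iff, Set.subset_def,
          arcsList]

/-- **Lemma (counting hamps by inclusion-exclusion).** For a digraph `D = (V, A)` with
`V` nonempty, `∑_F (-1)^{|F|} · #{σ ∈ S_V : F ⊆ A_σ} = #hamps(D̄)`, where the sum ranges
over all linear subsets `F` of `A`. -/
theorem hamps_by_linear_subsets (V : Type) [Fintype V] [DecidableEq V]
    (hV : Nonempty V) (A : Set (V × V)) :
    ∑ F ∈ Finset.univ.filter
        (fun F : Finset (V × V) =>
          (↑F : Set (V × V)) ⊆ A ∧ IsLinear V (↑F : Set (V × V))),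
      (-1 : ℤ) ^ F.card *
        (Set.ncard {σ : Equiv.Perm V | (↑F : Set (V × V)) ⊆ ApermSet σ} : ℤ)
      = (hampCount V Aᶜ : ℤ) :=
  hamps_by_linear_subsets_general V A
end
end

section
/- Let V be a finite set and let F ⊆ V×V be such that F = Arcs C for some path cover C of V. Then the number of V-listings v satisfying F ⊆ Arcs v equals |C|! (the factorial of the number of paths in C). -/
open scoped Classical

noncomputable section

/-! A listing `w` of `V` contains every arc of the path cover `C` exactly when it is a
concatenation of the paths of `C` in some order. Indeed, the first vertex of `w` has no
predecessor in `w`, hence none on its own path, so it starts that path; and a walk along arcs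
of a repetition-free list starting at its head can only follow that list, so the path is a
prefix of `w`, and one recurses on the rest of `w`. Distinct paths of `C` have distinct first
vertices, so the concatenation determines the order of the paths, and the listings in
question correspond to the `|C|!` orderings of `C`. -/

def IsListing {α : Type*} (S : Set α) (l : List α) : Prop :=
  l.Nodup ∧ ∀ x, x ∈ l ↔ x ∈ S

theorem ncard_setOf_isListing {α : Type*} {S : Set α} (hS : S.Finite) :
    {l | IsListing S l}.ncard = S.ncard.factorial := by
  have hlisting : {l | IsListing S l} = (hS.toFinset.toList.permutations.toFinset : Set _) := by
    ext l
    simp only [Set.mem_ofPred_eq, IsListing, Finset.mem_coe, List.mem_toFinset,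
      List.mem_permutations]
    constructor
    · rintro ⟨hl, hmem⟩
      exact (List.perm_ext_iff_of_nodup hl (Finset.nodup_toList _)).2 (by simpa using hmem)
    · intro hperm
      exact ⟨hperm.nodup_iff.2 (Finset.nodup_toList _), fun x => by simp [hperm.mem_iff]⟩
  rw [hlisting, Set.ncard_coe_finset,
    List.toFinset_card_of_nodup (List.nodup_permutations _ (Finset.nodup_toList _)),
    List.length_permutations, Finset.length_toList, Set.ncard_eq_toFinset_card S hS]

theorem injOn_flatten {α : Type*} {C : Set (List α)} (hne : ∀ p ∈ C, p ≠ [])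
    (hhead : Set.InjOn List.head? C) : Set.InjOn List.flatten {l | ∀ p ∈ l, p ∈ C} := by
  intro l₁ hl₁ l₂ hl₂ h
  induction l₁ generalizing l₂ with
  | nil =>
    cases l₂ with
    | nil => rfl
    | cons q _ =>
      exact absurd (List.append_eq_nil_iff.1 h.symm).1 (hne q (hl₂ q List.mem_cons_self))
  | cons p t₁ ih =>
    cases l₂ with
    | nil => exact absurd (List.append_eq_nil_iff.1 h).1 (hne p (hl₁ p List.mem_cons_self))
    | cons q t₂ =>
      have hpC := hl₁ p List.mem_cons_self
      have hqC := hl₂ q List.mem_cons_self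
      have hpq : p = q := hhead hpC hqC (by
        simpa [List.head?_append_of_ne_nil _ (hne p hpC),
          List.head?_append_of_ne_nil _ (hne q hqC)] using congrArg List.head? h)
      subst hpq
      rw [ih (fun r hr => hl₁ r (List.mem_cons_of_mem _ hr))
        (fun r hr => hl₂ r (List.mem_cons_of_mem _ hr)) (List.append_cancel_left h)]

section Arcs

variable {V : Type}

theorem mem_arcsList_iff_infix {w : List V} {a b : V} :
    (a, b) ∈ arcsList w ↔ [a, b] <:+: w := by
  induction w with
  | nil => simp [arcsList]
  | cons x t ih =>
    cases t with
    | nil => simpa [arcsList] using fun h => by simpa using h.length_le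
    | cons y t =>
      rw [List.infix_cons_iff, ← ih]
      simp [arcsList, and_comm]

theorem arcsList_subset_of_infix {u w : List V} (h : u <:+: w) : arcsList u ⊆ arcsList w :=
  fun _ hab => mem_arcsList_iff_infix.2 ((mem_arcsList_iff_infix.1 hab).trans h)

theorem exists_mem_arcsList_of_mem_tail {p : List V} {b : V} (h : b ∈ p.tail) :
    ∃ a, (a, b) ∈ arcsList p := by
  simp_rw [mem_arcsList_iff_infix]
  induction p with
  | nil => simp at h
  | cons x t ih =>
    cases t with
    | nil => simp at h
    | cons y t =>
      rcases List.mem_cons.1 h with rfl | h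
      · exact ⟨x, [], t, rfl⟩
      · obtain ⟨a, ha⟩ := ih h
        exact ⟨a, ha.trans (List.infix_cons (List.infix_refl _))⟩

theorem tail_subset_of_arcsList_subset {p w : List V} (h : arcsList p ⊆ arcsList w) :
    p.tail ⊆ w.tail := fun _ hb =>
  have ⟨_, hab⟩ := exists_mem_arcsList_of_mem_tail hb
  (List.of_mem_zip (h hab)).2

theorem mem_arcsList_of_mem_arcsList_append {u v : List V} {a b : V}
    (h : (a, b) ∈ arcsList (u ++ v)) (ha : a ∉ u) : (a, b) ∈ arcsList v := by
  rw [mem_arcsList_iff_infix, List.infix_append_iff_ne_nil] at h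
  rcases h with h | h | ⟨l₁, l₂, hl₁, -, hab, hsuffix, -⟩
  · exact absurd (h.subset (by simp)) ha
  · exact mem_arcsList_iff_infix.2 h
  · exact absurd (hsuffix.subset (by cases l₁ <;> simp_all)) ha

theorem prefix_of_arcsList_subset {p w : List V} (hw : w.Nodup)
    (hsub : arcsList p ⊆ arcsList w) (hhead : p.head? = w.head?) : p <+: w := by
  induction p generalizing w with
  | nil => exact List.nil_prefix
  | cons a t ih =>
    obtain ⟨w₀, rfl⟩ : ∃ w₀, w = a :: w₀ := by cases w <;> simp_all
    have ha : a ∉ w₀ := (List.nodup_cons.1 hw).1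
    cases t with
    | nil => simp
    | cons b t =>
      have hab : [a, b] <:+: a :: w₀ := mem_arcsList_iff_infix.1 (hsub (by simp [arcsList]))
      have hb : w₀.head? = some b := by
        rcases List.infix_cons_iff.1 hab with h | h
        · cases w₀ <;> simp_all
        · exact absurd (h.subset (by simp)) ha
      refine List.cons_prefix_cons.2 ⟨rfl, ih hw.of_cons ?_ hb.symm⟩
      rintro ⟨x, y⟩ hxy
      have hx : x ∉ [a] := by
        rintro hxa
        rw [List.mem_singleton.1 hxa] at hxy
        exact ha (tail_subset_of_arcsList_subset hsub (List.of_mem_zip hxy).1)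
      exact mem_arcsList_of_mem_arcsList_append (u := [a])
        (hsub (arcsList_subset_of_infix (List.infix_cons (List.infix_refl _)) hxy)) hx

theorem prefix_of_mem_of_head?_eq {p w : List V} {a : V} (hw : w.Nodup)
    (hsub : arcsList p ⊆ arcsList w) (ha : a ∈ p) (hwa : w.head? = some a) : p <+: w := by
  refine prefix_of_arcsList_subset hw hsub ?_
  obtain ⟨w₀, rfl⟩ := List.head?_eq_some_iff.1 hwa
  obtain ⟨b, t, rfl⟩ := List.exists_cons_of_ne_nil (List.ne_nil_of_mem ha)
  rcases List.mem_cons.1 ha with rfl | hat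
  · rfl
  · exact absurd (tail_subset_of_arcsList_subset hsub hat) (List.nodup_cons.1 hw).1

theorem arcsCover_subset_flatten {C : Set (List V)} {l : List (List V)} (hl : IsListing C l) :
    arcsCover C ⊆ arcsList l.flatten :=
  Set.iUnion₂_subset fun _ hp =>
    arcsList_subset_of_infix (List.infix_of_mem_flatten ((hl.2 _).2 hp))

theorem exists_isListing_flatten_eq {C : Set (List V)} {w : List V} (hw : w.Nodup)
    (hne : ∀ p ∈ C, p ≠ []) (hdisj : C.Pairwise List.Disjoint)
    (hmem : ∀ v, v ∈ w ↔ ∃ p ∈ C, v ∈ p) (harcs : ∀ p ∈ C, arcsList p ⊆ arcsList w) :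
    ∃ l, IsListing C l ∧ l.flatten = w := by
  induction h : w.length using Nat.strong_induction_on generalizing C w with
  | _ n ih =>
  cases w with
  | nil =>
    refine ⟨[], ⟨List.nodup_nil, fun p => iff_of_false List.not_mem_nil fun hp => ?_⟩, rfl⟩
    obtain ⟨v, hv⟩ := List.exists_mem_of_ne_nil p (hne p hp)
    exact absurd ((hmem v).2 ⟨p, hp, hv⟩) List.not_mem_nil
  | cons a w₀ =>
    obtain ⟨p, hpC, hap⟩ := (hmem a).1 List.mem_cons_self
    obtain ⟨w', hw'⟩ := prefix_of_mem_of_head?_eq hw (harcs p hpC) hap rfl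
    rw [← hw'] at hw hmem harcs h ⊢
    have hpw' : p.Disjoint w' := List.disjoint_of_nodup_append hw
    have hsep : ∀ q ∈ C, q ≠ p → ∀ v ∈ q, v ∉ p := fun q hq hqp _ hvq hvp =>
      hdisj hq hpC hqp hvq hvp
    have hmem' : ∀ v, v ∈ w' ↔ ∃ q ∈ C \ {p}, v ∈ q := fun v =>
      ⟨fun hv =>
        have ⟨q, hq, hvq⟩ := (hmem v).1 (List.mem_append_right p hv)
        ⟨q, ⟨hq, fun hqp => hpw' ((Set.mem_singleton_iff.1 hqp) ▸ hvq) hv⟩, hvq⟩,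
      fun ⟨q, ⟨hq, hqp⟩, hvq⟩ =>
        (List.mem_append.1 ((hmem v).2 ⟨q, hq, hvq⟩)).resolve_left (hsep q hq hqp v hvq)⟩
    have harcs' : ∀ q ∈ C \ {p}, arcsList q ⊆ arcsList w' := fun q ⟨hq, hqp⟩ ⟨x, _⟩ hxy =>
      mem_arcsList_of_mem_arcsList_append (harcs q hq hxy)
        (hsep q hq hqp x (List.of_mem_zip hxy).1)
    have hlen : w'.length < n := by
      simpa [← h, List.length_pos_iff] using hne p hpC
    obtain ⟨l, hl, rfl⟩ := ih _ hlen hw.of_append_right (fun q hq => hne q hq.1)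
      (hdisj.mono Set.sdiff_subset) hmem' harcs' rfl
    refine ⟨p :: l, ⟨List.nodup_cons.2 ⟨fun hp => ((hl.2 p).1 hp).2 rfl, hl.1⟩, fun q => ?_⟩, rfl⟩
    by_cases hqp : q = p <;> simp [hl.2, hqp, hpC]

end Arcs

namespace IsPathCover

variable {V : Type} {C : Set (List V)}

theorem eq_of_mem_of_mem (hC : IsPathCover V C) {p q : List V} {v : V} (hp : p ∈ C) (hq : q ∈ C)
    (hvp : v ∈ p) (hvq : v ∈ q) : p = q :=
  (hC.2 v).unique ⟨hp, hvp⟩ ⟨hq, hvq⟩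

theorem pairwise_disjoint (hC : IsPathCover V C) : C.Pairwise List.Disjoint :=
  fun _ hp _ hq hpq _ hvp hvq => hpq (hC.eq_of_mem_of_mem hp hq hvp hvq)

theorem injOn_head? (hC : IsPathCover V C) : Set.InjOn List.head? C := by
  intro p hp q hq h
  obtain ⟨a, t, rfl⟩ := List.exists_cons_of_ne_nil (hC.1 p hp).1
  exact hC.eq_of_mem_of_mem hp hq List.mem_cons_self (List.mem_of_mem_head? h.symm)

theorem finite_s13 [Finite V] (hC : IsPathCover V C) : C.Finite :=
  Set.Finite.of_finite_image (Set.toFinite _) hC.injOn_head?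

theorem nodup_flatten (hC : IsPathCover V C) {l : List (List V)} (hl : IsListing C l) :
    l.flatten.Nodup :=
  List.nodup_flatten.2 ⟨fun p hp => (hC.1 p ((hl.2 p).1 hp)).2,
    hl.1.pairwise_of_set_pairwise (hC.pairwise_disjoint.mono fun p hp => (hl.2 p).1 hp)⟩

theorem mem_flatten (hC : IsPathCover V C) {l : List (List V)} (hl : IsListing C l) (v : V) :
    v ∈ l.flatten :=
  have ⟨p, ⟨hpC, hvp⟩, _⟩ := hC.2 v
  List.mem_flatten.2 ⟨p, (hl.2 p).2 hpC, hvp⟩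

end IsPathCover

/-- **Proposition.** If `F = Arcs C` for a path cover `C` of `V`, then there are exactly
`|C|!` many `V`-listings `v` with `F ⊆ Arcs v`. -/
theorem count_listings_above_linear (V : Type) [Fintype V]
    (F : Set (V × V)) (C : Set (List V)) (hC : IsPathCover V C) (hF : F = arcsCover C) :
    Set.ncard {w : List V | w.Nodup ∧ (∀ x : V, x ∈ w) ∧ F ⊆ arcsList w}
      = (Set.ncard C).factorial := by
  have hlistings : {w : List V | w.Nodup ∧ (∀ x : V, x ∈ w) ∧ F ⊆ arcsList w}
      = List.flatten '' {l | IsListing C l} := by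
    subst hF
    ext w
    constructor
    · rintro ⟨hw, hall, hsub⟩
      exact exists_isListing_flatten_eq hw (fun p hp => (hC.1 p hp).1) hC.pairwise_disjoint
        (fun v => iff_of_true (hall v) (hC.2 v).exists) fun p hp =>
          (Set.subset_biUnion_of_mem hp).trans hsub
    · rintro ⟨l, hl, rfl⟩
      exact ⟨hC.nodup_flatten hl, hC.mem_flatten hl, arcsCover_subset_flatten hl⟩
  rw [hlistings, ((injOn_flatten (fun p hp => (hC.1 p hp).1) hC.injOn_head?).mono
    fun l hl p hp => (hl.2 p).1 hp).ncard_image, ncard_setOf_isListing hC.finite_s13]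
end
end
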